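/- arXiv:1302.5197 — 10 statements merged into one kernel-verified Lean document; each statement's English description precedes it below -/
import Mathlib

section
/- Let Δ and Γ be finite simplicial complexes and suppose there are simplicial complexes Δ = Δ_0, Δ_1, …, Δ_t = Γ such that for each 1 ≤ i ≤ t, one of Δ_{i−1}, Δ_i is isomorphic to a stellar subdivision of the other. Then there are simplicial complexes Δ = Γ_0, Γ_1, …, Γ_s = Γ such that for each 1 ≤ j ≤ s, one of Γ_{j−1}, Γ_j is isomorphic to an edge subdivision of the other. -/
/-- A finite simplicial complex on a finite vertex set `V`: a collection of nonempty
subsets of `V` (faces), closed under taking nonempty subsets, containing all singletons. -/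
structure SC (α : Type*) where
  V : Finset α
  faces : Set (Finset α)
  nonempty_mem : ∀ F ∈ faces, F.Nonempty
  subset_V : ∀ F ∈ faces, F ⊆ V
  down_closed : ∀ F ∈ faces, ∀ T ⊆ F, T.Nonempty → T ∈ faces
  singleton_mem : ∀ x ∈ V, ({x} : Finset α) ∈ faces

/-- The link of a face `F` in a collection of faces `K`. -/
def lkS {α : Type*} [DecidableEq α] (K : Set (Finset α)) (F : Finset α) : Set (Finset α) :=
  {T | T.Nonempty ∧ T ∩ F = ∅ ∧ T ∪ F ∈ K}

/-- The faces of the stellar subdivision of `K` at `F` with new vertex `v`. -/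
def stellarS {α : Type*} [DecidableEq α] (K : Set (Finset α)) (F : Finset α) (v : α) :
    Set (Finset α) :=
  {T ∈ K | ¬ F ⊆ T} ∪
  {U | ∃ S T : Finset α, S ⊂ F ∧ (T ∈ lkS K F ∨ T = ∅) ∧ U = insert v (S ∪ T)}

/-- `Γ` is the stellar subdivision of the simplicial complex `Δ` at the face `F`
(of size at least 2) with new vertex `v ∉ Δ.V`. -/
def IsStellar {α : Type*} [DecidableEq α] (Δ Γ : SC α) (F : Finset α) (v : α) : Prop :=
  F ∈ Δ.faces ∧ 2 ≤ F.card ∧ v ∉ Δ.V ∧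
  Γ.V = insert v Δ.V ∧ Γ.faces = stellarS Δ.faces F v

/-- `Γ` is an edge subdivision of `Δ`: a stellar subdivision at a face of size 2. -/
def IsEdgeSubdivOf {α : Type*} [DecidableEq α] (Δ Γ : SC α) : Prop :=
  ∃ (e : Finset α) (v : α), e.card = 2 ∧ IsStellar Δ Γ e v

/-- `F` is a missing face of the collection of faces `K`: it has size at least 2, it is
not a face, and all its proper nonempty subsets are faces. -/
def Missing {α : Type*} (K : Set (Finset α)) (F : Finset α) : Prop :=
  2 ≤ F.card ∧ F ∉ K ∧ ∀ T ⊂ F, T.Nonempty → T ∈ K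

/-- A simplicial complex is flag if all its missing faces have size two. -/
def IsFlag {α : Type*} (Δ : SC α) : Prop := ∀ F, Missing Δ.faces F → F.card = 2

/-- The pair (faces `K`, vertex set `V`) is isomorphic to the pair (faces `L`, vertex
set `W`): some bijection of the vertex sets maps the faces exactly onto the faces. -/
def IsomS {α β : Type*} [DecidableEq α] [DecidableEq β] (K : Set (Finset α)) (V : Set α)
    (L : Set (Finset β)) (W : Set β) : Prop :=
  ∃ f : α → β, Set.BijOn f V W ∧
    ∀ T : Finset α, ↑T ⊆ V → (T ∈ K ↔ T.image f ∈ L)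

/-- Two simplicial complexes are isomorphic. -/
def Isom {α β : Type*} [DecidableEq α] [DecidableEq β] (Δ : SC α) (Γ : SC β) : Prop :=
  IsomS Δ.faces ↑Δ.V Γ.faces ↑Γ.V

/-- One of `X`, `Y` is isomorphic to a stellar subdivision of the other. -/
def StellarIsoStep {α : Type*} [DecidableEq α] (X Y : SC α) : Prop :=
  (∃ (Z : SC α) (F : Finset α) (w : α), IsStellar X Z F w ∧ Isom Z Y) ∨
  (∃ (Z : SC α) (F : Finset α) (w : α), IsStellar Y Z F w ∧ Isom Z X)

/-- One of `X`, `Y` is isomorphic to an edge subdivision of the other. -/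
def EdgeIsoStep {α : Type*} [DecidableEq α] (X Y : SC α) : Prop :=
  (∃ Z : SC α, IsEdgeSubdivOf X Z ∧ Isom Z Y) ∨
  (∃ Z : SC α, IsEdgeSubdivOf Y Z ∧ Isom Z X)

/-!
A stellar subdivision at a face `F` with `|F| ≥ 3` factors through edge moves. Pick an edge
`e ⊂ F` and a fresh vertex `u`; then subdividing at `F` (new vertex `w`) and afterwards at `e`
(new vertex `u`) gives the same complex as subdividing at `e` first and then at the smaller face
`{u} ∪ (F \ e)`. So `Δ ↦ stellar_Δ(F)` is the composite of an edge subdivision, a stellar move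
at a face of size `|F| - 1` (induction) and an inverse edge subdivision. An isomorphism `Δ ≅ Γ`
is absorbed in the same way: if `Δ` has an edge `e`, the edge subdivision of `Δ` at `e` is
isomorphic to that of `Γ` at the image of `e`.
-/

namespace Relation

variable {β : Type*} {r : β → β → Prop}

theorem reflTransGen_of_forall_succ {D : ℕ → β} {t : ℕ}
    (h : ∀ i, 1 ≤ i → i ≤ t → r (D (i - 1)) (D i)) : ReflTransGen r (D 0) (D t) := by
  induction t with
  | zero => rfl
  | succ t ih => exact (ih fun i h1 h2 => h i h1 (by omega)).tail (h (t + 1) (by omega) le_rfl)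

theorem ReflTransGen.exists_seq {a b : β} (h : ReflTransGen r a b) :
    ∃ (s : ℕ) (E : ℕ → β), E 0 = a ∧ E s = b ∧ ∀ j, 1 ≤ j → j ≤ s → r (E (j - 1)) (E j) := by
  induction h using ReflTransGen.head_induction_on with
  | refl => exact ⟨0, fun _ => b, rfl, rfl, by omega⟩
  | @head a c hac _ ih =>
    obtain ⟨s, E, h0, hs, hE⟩ := ih
    refine ⟨s + 1, fun j => if j = 0 then a else E (j - 1), rfl, by simpa using hs, ?_⟩
    rintro (_ | _ | j) h1 h2
    · omega
    · simpa [h0] using hac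
    · simpa using hE (j + 1) (by omega) (by omega)

end Relation

section Stellar

variable {α : Type*} [DecidableEq α]

theorem mem_stellarS_iff {K : Set (Finset α)} {F : Finset α} {v : α} (hF : F ∈ K)
    (hvF : v ∉ F) (hvK : ∀ X ∈ K, v ∉ X) (X : Finset α) :
    X ∈ stellarS K F v ↔ ¬F ⊆ X ∧ if v ∈ X then X.erase v ∪ F ∈ K else X ∈ K := by
  constructor
  · rintro (⟨hXK, hFX⟩ | ⟨S, T, hSF, hT, rfl⟩)
    · simpa [hvK X hXK] using ⟨hFX, hXK⟩
    have hTF : Disjoint T F := by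
      rcases hT with hT | rfl
      · exact Finset.disjoint_iff_inter_eq_empty.2 hT.2.1
      · exact Finset.disjoint_empty_left F
    have hTvF : T ∪ F ∈ K := by
      rcases hT with hT | rfl
      · exact hT.2.2
      · simpa using hF
    have hvT : v ∉ T := fun h => hvK _ hTvF (Finset.mem_union_left F h)
    have hvS : v ∉ S := fun h => hvF (hSF.subset h)
    refine ⟨fun hFX => hSF.not_subset fun x hx => ?_, ?_⟩
    · have hxv : x ≠ v := fun h => hvF (h ▸ hx)
      have : x ∈ S ∨ x ∈ T := by simpa [hxv] using hFX hx
      exact this.resolve_right fun hxT => Finset.disjoint_left.1 hTF hxT hx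
    · have : (insert v (S ∪ T)).erase v ∪ F = T ∪ F := by
        rw [Finset.erase_insert (by simp [hvS, hvT]), Finset.union_right_comm,
          Finset.union_eq_right.2 hSF.subset, Finset.union_comm]
      rw [if_pos (Finset.mem_insert_self _ _), this]
      exact hTvF
  · rintro ⟨hFX, hX⟩
    by_cases hvX : v ∈ X
    · rw [if_pos hvX] at hX
      refine Or.inr ⟨X.erase v ∩ F, X.erase v \ F, ?_, ?_, ?_⟩
      · refine Finset.ssubset_iff_subset_ne.2 ⟨Finset.inter_subset_right, fun h => hFX ?_⟩
        exact h ▸ Finset.inter_subset_left.trans (Finset.erase_subset v X)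
      · rcases (X.erase v \ F).eq_empty_or_nonempty with h | h
        · exact Or.inr h
        · exact Or.inl ⟨h, Finset.sdiff_inter_self _ _, by rwa [Finset.sdiff_union_self_eq_union]⟩
      · rw [Finset.union_comm, Finset.sdiff_union_inter, Finset.insert_erase hvX]
    · rw [if_neg hvX] at hX
      exact Or.inl ⟨hX, hFX⟩

theorem notMem_of_mem_stellarS {K : Set (Finset α)} {F X : Finset α} {u v : α} (hF : F ∈ K)
    (hvF : v ∉ F) (hvK : ∀ X ∈ K, v ∉ X) (huK : ∀ X ∈ K, u ∉ X) (huv : u ≠ v)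
    (hX : X ∈ stellarS K F v) : u ∉ X := by
  intro huX
  rw [mem_stellarS_iff hF hvF hvK] at hX
  split_ifs at hX
  · exact huK _ hX.2 (Finset.mem_union_left F (Finset.mem_erase.2 ⟨huv, huX⟩))
  · exact huK _ hX.2 huX

end Stellar

namespace SC

theorem notMem_of_mem_faces {α : Type*} (Δ : SC α) {v : α} (hv : v ∉ Δ.V) {X : Finset α}
    (hX : X ∈ Δ.faces) : v ∉ X :=
  fun h => hv (Δ.subset_V X hX h)

variable {α : Type*} [DecidableEq α]

theorem mem_stellarS_iff (Δ : SC α) {F : Finset α} {v : α} (hF : F ∈ Δ.faces) (hv : v ∉ Δ.V)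
    (X : Finset α) : X ∈ stellarS Δ.faces F v ↔
      ¬F ⊆ X ∧ if v ∈ X then X.erase v ∪ F ∈ Δ.faces else X ∈ Δ.faces :=
  _root_.mem_stellarS_iff hF (Δ.notMem_of_mem_faces hv hF) (fun _ => Δ.notMem_of_mem_faces hv) X

def stellar (Δ : SC α) (F : Finset α) (v : α) (hF : F ∈ Δ.faces) (h2 : 2 ≤ F.card)
    (hv : v ∉ Δ.V) : SC α where
  V := insert v Δ.V
  faces := stellarS Δ.faces F v
  nonempty_mem X hX := by
    rw [Δ.mem_stellarS_iff hF hv] at hX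
    split_ifs at hX with hvX
    · exact ⟨v, hvX⟩
    · exact Δ.nonempty_mem X hX.2
  subset_V X hX := by
    rw [Δ.mem_stellarS_iff hF hv] at hX
    split_ifs at hX with hvX
    · rw [← Finset.insert_erase hvX]
      exact Finset.insert_subset_insert v
        (Finset.subset_union_left.trans (Δ.subset_V _ hX.2))
    · exact (Δ.subset_V X hX.2).trans (Finset.subset_insert v Δ.V)
  down_closed X hX T hTX hT := by
    have hFne : F.Nonempty := Finset.card_pos.1 (by omega)
    rw [Δ.mem_stellarS_iff hF hv] at hX ⊢
    refine ⟨fun h => hX.1 (h.trans hTX), ?_⟩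
    by_cases hvT : v ∈ T
    · have hvX : v ∈ X := hTX hvT
      rw [if_pos hvX] at hX
      rw [if_pos hvT]
      exact Δ.down_closed _ hX.2 _
        (Finset.union_subset_union_left (Finset.erase_subset_erase v hTX))
        (hFne.mono Finset.subset_union_right)
    · rw [if_neg hvT]
      by_cases hvX : v ∈ X
      · rw [if_pos hvX] at hX
        refine Δ.down_closed _ hX.2 _ (fun x hx => ?_) hT
        exact Finset.mem_union_left F (Finset.mem_erase.2 ⟨fun h => hvT (h ▸ hx), hTX hx⟩)
      · rw [if_neg hvX] at hX
        exact Δ.down_closed _ hX.2 _ hTX hT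
  singleton_mem x hx := by
    rw [Δ.mem_stellarS_iff hF hv]
    refine ⟨fun h => by simpa using (Finset.card_le_card h).trans_lt' h2, ?_⟩
    split_ifs with hxv
    · simpa [Finset.mem_singleton.1 hxv] using hF
    · exact Δ.singleton_mem x ((Finset.mem_insert.1 hx).resolve_left fun h => hxv (by simp [h]))

theorem isStellar_stellar (Δ : SC α) {F : Finset α} {v : α} (hF : F ∈ Δ.faces) (h2 : 2 ≤ F.card)
    (hv : v ∉ Δ.V) : IsStellar Δ (Δ.stellar F v hF h2 hv) F v :=
  ⟨hF, h2, hv, rfl, rfl⟩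

theorem insert_sdiff_mem_stellarS (Δ : SC α) {F e : Finset α} {u : α} (hF : F ∈ Δ.faces)
    (heF : e ⊆ F) (he : e.Nonempty) (hu : u ∉ Δ.V) :
    insert u (F \ e) ∈ stellarS Δ.faces e u := by
  have heK : e ∈ Δ.faces := Δ.down_closed F hF e heF he
  have huF := Δ.notMem_of_mem_faces hu hF
  have hue := Δ.notMem_of_mem_faces hu heK
  rw [Δ.mem_stellarS_iff heK hu, if_pos (Finset.mem_insert_self u _),
    Finset.erase_insert fun h => huF (Finset.mem_sdiff.1 h).1, Finset.sdiff_union_of_subset heF]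
  obtain ⟨x, hx⟩ := he
  exact ⟨fun h => by grind, hF⟩

theorem stellarS_stellarS_comm (Δ : SC α) {F e : Finset α} {u w : α} (hF : F ∈ Δ.faces)
    (heF : e ⊂ F) (he : e.Nonempty) (hu : u ∉ Δ.V) (hw : w ∉ Δ.V) (huw : u ≠ w) :
    stellarS (stellarS Δ.faces F w) e u =
      stellarS (stellarS Δ.faces e u) (insert u (F \ e)) w := by
  have heK : e ∈ Δ.faces := Δ.down_closed F hF e heF.subset he
  have huF := Δ.notMem_of_mem_faces hu hF
  have hwF := Δ.notMem_of_mem_faces hw hF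
  have hue := Δ.notMem_of_mem_faces hu heK
  have hwe := Δ.notMem_of_mem_faces hw heK
  have huK := fun X => Δ.notMem_of_mem_faces hu (X := X)
  have hwK := fun X => Δ.notMem_of_mem_faces hw (X := X)
  have heL : e ∈ stellarS Δ.faces F w := Or.inl ⟨heK, heF.not_subset⟩
  have hwF' : w ∉ insert u (F \ e) := by simp [huw.symm, hwF]
  ext X
  rw [_root_.mem_stellarS_iff heL hue fun _ => notMem_of_mem_stellarS hF hwF hwK huK huw,
    _root_.mem_stellarS_iff (Δ.insert_sdiff_mem_stellarS hF heF.subset he hu) hwF'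
      fun _ => notMem_of_mem_stellarS heK hue huK hwK huw.symm,
    Δ.mem_stellarS_iff hF hw, Δ.mem_stellarS_iff hF hw, Δ.mem_stellarS_iff heK hu,
    Δ.mem_stellarS_iff heK hu]
  have hF' : u ∈ X → (F ⊆ X.erase u ∪ e ↔ insert u (F \ e) ⊆ X) := by grind
  have he' : e ⊆ X.erase w ∪ insert u (F \ e) ↔ e ⊆ X := by grind
  have hY : (X.erase w ∪ insert u (F \ e)).erase u ∪ e = (X.erase u).erase w ∪ F := by
    ext x; grind
  have hZ : (X.erase u ∪ e).erase w ∪ F = (X.erase u).erase w ∪ F := by ext x; grind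
  by_cases huX : u ∈ X <;> by_cases hwX : w ∈ X <;>
    simp only [huX, hwX, hF', he', hY, hZ, Finset.mem_union, Finset.mem_erase, Finset.mem_insert,
      if_true, if_false, Finset.erase_eq_of_notMem, not_false_eq_true] <;>
    grind

end SC

section Transport

variable {α β : Type*} [DecidableEq α] [DecidableEq β]

theorem isom_of_isStellar {Δ Z : SC α} {Δ' Z' : SC β} {F : Finset α} {v : α} {v' : β}
    {f : α → β} (hf : Set.BijOn f Δ.V Δ'.V)
    (hfK : ∀ T : Finset α, ↑T ⊆ (Δ.V : Set α) → (T ∈ Δ.faces ↔ T.image f ∈ Δ'.faces))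
    (h : IsStellar Δ Z F v) (h' : IsStellar Δ' Z' (F.image f) v') : Isom Z Z' := by
  obtain ⟨hF, -, hv, hZV, hZf⟩ := h
  obtain ⟨hF', -, hv', hZ'V, hZ'f⟩ := h'
  set g := Function.update f v v'
  have hgv : g v = v' := Function.update_self v v' f
  have hfg : Set.EqOn f g Δ.V := fun x hx =>
    (Function.update_of_ne (hx.ne_of_notMem hv) v' f).symm
  have himg : ∀ T : Finset α, ↑T ⊆ (Δ.V : Set α) → T.image f = T.image g :=
    fun T hT => Finset.image_congr (hfg.mono hT)
  have hg : Set.BijOn g ↑(insert v Δ.V) ↑(insert v' Δ'.V) := by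
    rw [Finset.coe_insert, Finset.coe_insert, ← hgv]
    exact (hf.congr hfg).insert (by simpa [hgv] using hv')
  refine ⟨g, by rwa [hZV, hZ'V], fun T hT => ?_⟩
  replace hT : T ⊆ insert v Δ.V := by rw [hZV] at hT; exact_mod_cast hT
  have hFV : ↑F ⊆ (Δ.V : Set α) := Δ.subset_V F hF
  rw [hZf, hZ'f, Δ.mem_stellarS_iff hF hv, Δ'.mem_stellarS_iff hF' hv', himg F hFV,
    Finset.image_subset_image_iff_of_injOn hg.injOn
      ((Finset.coe_subset.1 hFV).trans (Finset.subset_insert v Δ.V)) hT]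
  have hvT : v' ∈ T.image g ↔ v ∈ T := by
    rw [← hgv, Finset.mem_coe.symm, Finset.coe_image]
    exact hg.injOn.mem_image_iff (Finset.coe_subset.2 hT) (by simp)
  by_cases hvT' : v ∈ T
  · have hTV : ↑(T.erase v ∪ F) ⊆ (Δ.V : Set α) := by
      intro x hx
      rcases Finset.mem_union.1 hx with hx | hx
      · exact (Finset.mem_insert.1 (hT (Finset.mem_of_mem_erase hx))).resolve_left
          (Finset.ne_of_mem_erase hx)
      · exact hFV hx
    have herase : (T.image g).erase v' = (T.erase v).image g := by
      rw [← hgv, ← Finset.sdiff_singleton_eq_erase, ← Finset.sdiff_singleton_eq_erase,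
        ← Finset.image_singleton, Finset.image_sdiff_of_injOn (hg.injOn.mono hT)
          (Finset.singleton_subset_iff.2 hvT')]
    rw [if_pos hvT', if_pos (hvT.2 hvT'), herase, ← Finset.image_union, ← himg _ hTV, hfK _ hTV]
  · have hTV : ↑T ⊆ (Δ.V : Set α) := fun x hx =>
      (Finset.mem_insert.1 (hT hx)).resolve_left (hx.ne_of_notMem hvT')
    rw [if_neg hvT', if_neg (mt hvT.1 hvT'), ← himg T hTV, hfK T hTV]

end Transport

section EdgeEquiv

variable {α : Type*} [DecidableEq α]

theorem isom_refl (X : SC α) : Isom X X :=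
  ⟨id, Set.bijOn_id _, fun T _ => by simp⟩

abbrev EdgeEquiv (X Y : SC α) : Prop := Relation.ReflTransGen EdgeIsoStep X Y

instance : Std.Symm (EdgeIsoStep (α := α)) := ⟨fun _ _ h => h.symm⟩

theorem EdgeEquiv.symm {X Y : SC α} (h : EdgeEquiv X Y) : EdgeEquiv Y X :=
  Std.Symm.symm _ _ h

theorem EdgeIsoStep.of_isStellar {X Z : SC α} {e : Finset α} {v : α} (h : IsStellar X Z e v)
    (he : e.card = 2) : EdgeIsoStep X Z :=
  Or.inl ⟨Z, ⟨e, v, he, h⟩, isom_refl Z⟩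

theorem IsStellar.exists_edge {X Z : SC α} {F : Finset α} {w : α} (h : IsStellar X Z F w) :
    ∃ e ∈ Z.faces, e.card = 2 := by
  obtain ⟨hF, h2, hw, -, hZf⟩ := h
  obtain ⟨a, ha⟩ := Finset.card_pos.1 (show 0 < F.card by omega)
  have hwF := X.notMem_of_mem_faces hw hF
  have haw : a ≠ w := fun h => hwF (h ▸ ha)
  refine ⟨{w, a}, ?_, Finset.card_pair haw.symm⟩
  rw [hZf, X.mem_stellarS_iff hF hw, if_pos (Finset.mem_insert_self w _),
    Finset.erase_insert (by simpa using haw.symm), Finset.singleton_union, Finset.insert_eq_of_mem ha,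
    Finset.subset_insert_iff_of_notMem hwF]
  exact ⟨fun h => by simpa using (Finset.card_le_card h).trans_lt' h2, hF⟩

theorem edgeEquiv_of_isom [Infinite α] {X Y : SC α} (h : Isom X Y)
    (hX : ∃ e ∈ X.faces, e.card = 2) : EdgeEquiv X Y := by
  obtain ⟨f, hf, hfK⟩ := h
  obtain ⟨e, he, he2⟩ := hX
  obtain ⟨p, hp⟩ := Infinite.exists_notMem_finset X.V
  obtain ⟨q, hq⟩ := Infinite.exists_notMem_finset Y.V
  have heV : ↑e ⊆ (X.V : Set α) := X.subset_V e he
  have hfe : e.image f ∈ Y.faces := (hfK e heV).1 he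
  have hfe2 : (e.image f).card = 2 := by
    rw [Finset.card_image_of_injOn (hf.injOn.mono heV), he2]
  have hX₁ := X.isStellar_stellar he he2.ge hp
  have hY₁ := Y.isStellar_stellar hfe hfe2.ge hq
  exact .tail (.single (Or.inl ⟨_, ⟨e, p, he2, hX₁⟩, isom_of_isStellar hf hfK hX₁ hY₁⟩))
    (EdgeIsoStep.of_isStellar hY₁ hfe2).symm

theorem IsStellar.edgeEquiv [Infinite α] {X Z : SC α} {F : Finset α} {w : α}
    (h : IsStellar X Z F w) : EdgeEquiv X Z := by
  induction hn : F.card using Nat.strong_induction_on generalizing X Z F w with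
  | _ n ih =>
  obtain ⟨hF, h2, hw, hZV, hZf⟩ := h
  obtain h2 | h3 := h2.eq_or_lt
  · exact .single (EdgeIsoStep.of_isStellar ⟨hF, h2.le, hw, hZV, hZf⟩ h2.symm)
  obtain ⟨e, heF, he2⟩ := Finset.exists_subset_card_eq h3.le
  have heF' : e ⊂ F := Finset.ssubset_iff_subset_ne.2 ⟨heF, fun h => by rw [h] at he2; omega⟩
  have he : e.Nonempty := Finset.card_pos.1 (by omega)
  have heK := X.down_closed F hF e heF he
  obtain ⟨u, hu⟩ := Infinite.exists_notMem_finset (insert w X.V)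
  rw [Finset.mem_insert, not_or] at hu
  obtain ⟨huw, huV⟩ := hu
  set B := X.stellar e u heK he2.ge huV
  have hB : IsStellar X B e u := X.isStellar_stellar heK he2.ge huV
  have hF'B := X.insert_sdiff_mem_stellarS hF heF he huV
  have hF'card : (insert u (F \ e)).card = F.card - 1 := by
    rw [Finset.card_insert_of_notMem fun h => huV (X.subset_V F hF (Finset.mem_sdiff.1 h).1),
      Finset.card_sdiff_of_subset heF, he2]
    omega
  have hwB : w ∉ B.V := by simp [B, SC.stellar, hw, Ne.symm huw]
  set C := B.stellar (insert u (F \ e)) w hF'B (by omega) hwB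
  have hC : IsStellar B C (insert u (F \ e)) w := B.isStellar_stellar hF'B (by omega) hwB
  have hZC : IsStellar Z C e u := by
    refine ⟨by rw [hZf]; exact Or.inl ⟨heK, heF'.not_subset⟩, he2.ge, by simp [hZV, huw, huV],
      by rw [hZV]; exact Finset.insert_comm w u X.V, ?_⟩
    rw [hZf]
    exact (X.stellarS_stellarS_comm hF heF' he huV hw huw).symm
  exact .head (EdgeIsoStep.of_isStellar hB he2)
    ((ih _ (by omega) hC hF'card).tail (EdgeIsoStep.of_isStellar hZC he2).symm)

theorem StellarIsoStep.edgeEquiv [Infinite α] {X Y : SC α} (h : StellarIsoStep X Y) :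
    EdgeEquiv X Y := by
  rcases h with ⟨Z, F, w, hst, hiso⟩ | ⟨Z, F, w, hst, hiso⟩
  · exact hst.edgeEquiv.trans (edgeEquiv_of_isom hiso hst.exists_edge)
  · exact EdgeEquiv.symm (hst.edgeEquiv.trans (edgeEquiv_of_isom hiso hst.exists_edge))

end EdgeEquiv

/-- If two simplicial complexes are connected by a sequence of complexes
where each consecutive pair differs by a stellar subdivision (up to isomorphism), then
they are connected by a sequence where each consecutive pair differs by an *edge*
subdivision (up to isomorphism). -/
theorem stellar_to_edge_sequence {α : Type*} [DecidableEq α] [Infinite α]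
    (Δ Γ : SC α)
    (t : ℕ) (D : ℕ → SC α) (hD0 : D 0 = Δ) (hDt : D t = Γ)
    (hstep : ∀ i, 1 ≤ i → i ≤ t → StellarIsoStep (D (i - 1)) (D i)) :
    ∃ (s : ℕ) (E : ℕ → SC α), E 0 = Δ ∧ E s = Γ ∧
      (∀ j, 1 ≤ j → j ≤ s → EdgeIsoStep (E (j - 1)) (E j)) := by
  have h : EdgeEquiv (D 0) (D t) := Relation.reflTransGen_closed
    (fun _ _ => StellarIsoStep.edgeEquiv) _ _ (Relation.reflTransGen_of_forall_succ hstep)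
  rw [hD0, hDt] at h
  exact h.exists_seq
end

section
/- For every finite simplicial complex Δ there exists a finite sequence of simplicial complexes Δ = Δ_0, Δ_1, …, Δ_m such that each Δ_i (1 ≤ i ≤ m) is an edge subdivision of Δ_{i−1}, the length m equals the number of faces of Δ of cardinality at least 2, and Δ_m is isomorphic to the barycentric subdivision br(Δ). -/
/-- The faces of the barycentric subdivision of the collection of faces `K`: nonempty
finite sets of faces of `K` that are totally ordered by inclusion. -/
def barycentricFaces {α : Type*} (K : Set (Finset α)) : Set (Finset (Finset α)) :=
  {C | C.Nonempty ∧ (↑C : Set (Finset α)) ⊆ K ∧ IsChain (· ⊆ ·) (↑C : Set (Finset α))}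

/-!
Vertices of the intermediate complexes are finite sets of vertices of `Δ`: `{x}` stands for the
vertex `x` and a face `G` for its barycenter. Order the vertices and subdivide the faces `F` with
at least two vertices in lexicographic order; the step for `F`, with largest vertex `t`, is the
edge subdivision at `{F \ {t}, {t}}` with new vertex `F` (the prefix `F \ {t}` comes earlier, so
it is already a vertex). After the faces in `A` have been subdivided, the faces are the sets `X`
of vertices whose members in `A` form a chain, whose union is a face of `Δ`, and which do not
cover any `H ∈ A` by their members not containing `H`. With every face subdivided, this says
that `X` is a chain of faces of `Δ`: the barycentric subdivision. Finally fresh vertices of `α`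
are chosen for the barycenters.
-/

namespace Finset

section LexLT

variable {α : Type*} [LinearOrder α] {s t u : Finset α}

/-- Lexicographic comparison of the increasing enumerations of two finite sets, a proper
prefix coming first. -/
def LexLT (s t : Finset α) : Prop :=
  (s ⊂ t ∧ ∀ x ∈ s, ∀ y ∈ t, y ∉ s → x < y) ∨
    ∃ d ∈ s, d ∉ t ∧ (∀ x < d, x ∈ s ↔ x ∈ t) ∧ ∃ y ∈ t, d < y

theorem LexLT.irrefl (s : Finset α) : ¬ LexLT s s := by
  rintro (⟨h, -⟩ | ⟨d, hds, hdt, -⟩)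
  exacts [h.ne rfl, hdt hds]

theorem LexLT.asymm (hst : LexLT s t) : ¬ LexLT t s := by
  rcases hst with ⟨hst, hpre⟩ | ⟨d, hds, hdt, hagree, y, hyt, hdy⟩
  · rintro (⟨hts, -⟩ | ⟨e, het, hes, -, z, hzs, hez⟩)
    · exact hst.not_subset hts.subset
    · exact (hpre z hzs e het hes).not_gt hez
  · rintro (⟨hts, hpre⟩ | ⟨e, het, hes, hagree', -⟩)
    · exact (hpre y hyt d hds hdt).not_gt hdy
    · rcases lt_trichotomy d e with hde | rfl | hed
      · exact hdt ((hagree' d hde).2 hds)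
      · exact hdt het
      · exact hes ((hagree e hed).2 het)

theorem LexLT.trans (hst : LexLT s t) (htu : LexLT t u) : LexLT s u := by
  rcases hst with ⟨hst, hpre⟩ | ⟨d, hds, hdt, hagree, y, hyt, hdy⟩
  · rcases htu with ⟨htu, hpre'⟩ | ⟨d, hdt, hdu, hagree, y, hyu, hdy⟩
    · refine Or.inl ⟨hst.trans htu, fun x hxs y hyu hys => ?_⟩
      by_cases hyt : y ∈ t
      · exact hpre x hxs y hyt hys
      · exact hpre' x (hst.subset hxs) y hyu hyt
    · by_cases hds : d ∈ s
      · refine Or.inr ⟨d, hds, hdu, fun x hx => ⟨fun hxs => (hagree x hx).1 (hst.subset hxs),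
          fun hxu => ?_⟩, y, hyu, hdy⟩
        by_contra hxs
        exact (hpre d hds x ((hagree x hx).2 hxu) hxs).not_gt hx
      · have hsd : ∀ x ∈ s, x < d := fun x hxs => hpre x hxs d hdt hds
        refine Or.inl ⟨⟨fun x hxs => (hagree x (hsd x hxs)).1 (hst.subset hxs), fun hus => ?_⟩,
          fun x hxs z hzu hzs => ?_⟩
        · exact (hsd y (hus hyu)).not_gt hdy
        · by_contra hxz
          have hzd := (not_lt.1 hxz).trans_lt (hsd x hxs)
          exact hxz (hpre x hxs z ((hagree z hzd).2 hzu) hzs)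
  · rcases htu with ⟨htu, hpre⟩ | ⟨e, het, heu, hagree', z, hzu, hez⟩
    · have hdu : d ∉ u := fun hdu => (hpre y hyt d hdu hdt).not_gt hdy
      refine Or.inr ⟨d, hds, hdu, fun x hx => ⟨fun hxs => htu.subset ((hagree x hx).1 hxs),
        fun hxu => (hagree x hx).2 ?_⟩, y, htu.subset hyt, hdy⟩
      by_contra hxt
      exact (hpre y hyt x hxu hxt).not_gt (hx.trans hdy)
    · rcases lt_trichotomy d e with hde | rfl | hed
      · exact Or.inr ⟨d, hds, fun hdu => hdt ((hagree' d hde).2 hdu),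
          fun x hx => (hagree x hx).trans (hagree' x (hx.trans hde)), z, hzu, hde.trans hez⟩
      · exact absurd het hdt
      · exact Or.inr ⟨e, (hagree e hed).2 het, heu,
          fun x hx => (hagree x (hx.trans hed)).trans (hagree' x hx), z, hzu, hez⟩

/-- Two distinct sets are compared at the least element of their symmetric difference. -/
theorem lexLT_or_lexLT_of_ne (hst : s ≠ t) : LexLT s t ∨ LexLT t s := by
  classical
  suffices key : ∀ s t : Finset α, ∀ d ∈ s, d ∉ t → (∀ x < d, x ∈ s ↔ x ∈ t) →
      LexLT s t ∨ LexLT t s by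
    obtain ⟨d, hd, hmin⟩ := (symmDiff s t).exists_min_image id
      (Finset.symmDiff_nonempty.2 hst)
    have hagree : ∀ x < d, x ∈ s ↔ x ∈ t := fun x hx => by
      by_contra h
      exact (hmin x (Finset.mem_symmDiff.2 (by tauto))).not_gt hx
    rcases Finset.mem_symmDiff.1 hd with ⟨hds, hdt⟩ | ⟨hdt, hds⟩
    · exact key s t d hds hdt hagree
    · exact (key t s d hdt hds fun x hx => (hagree x hx).symm).symm
  intro s t d hds hdt hagree
  by_cases hy : ∃ y ∈ t, d < y
  · exact Or.inl (Or.inr ⟨d, hds, hdt, hagree, hy⟩)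
  · push Not at hy
    have htd : ∀ x ∈ t, x < d := fun x hxt => (hy x hxt).lt_of_ne fun h => hdt (h ▸ hxt)
    refine Or.inr (Or.inl ⟨⟨fun x hxt => (hagree x (htd x hxt)).2 hxt, fun h => hdt (h hds)⟩,
      fun x hxt y hys hyt => ?_⟩)
    by_contra hxy
    exact hyt ((hagree y ((not_lt.1 hxy).trans_lt (htd x hxt))).1 hys)

def LexLE (s t : Finset α) : Prop := s.LexLT t ∨ s = t

instance : IsTrans (Finset α) LexLE where
  trans _ _ _ := by
    rintro (hst | rfl) (htu | rfl)
    exacts [Or.inl (hst.trans htu), Or.inl hst, Or.inl htu, Or.inr rfl]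

instance : Std.Antisymm (LexLE (α := α)) where
  antisymm _ _ := by
    rintro (hst | rfl) (hts | hts)
    exacts [absurd hts hst.asymm, hts.symm, rfl, rfl]

instance : Std.Total (LexLE (α := α)) where
  total s t := by
    rcases eq_or_ne s t with rfl | hst
    · exact Or.inl (Or.inr rfl)
    · exact (lexLT_or_lexLT_of_ne hst).imp Or.inl Or.inl

end LexLT

section LexLTInsert

variable {α : Type*} [DecidableEq α] [LinearOrder α] {F G : Finset α} {t z : α}

theorem lexLT_erase_of_isGreatest (ht : IsGreatest (↑F : Set α) t) : LexLT (F.erase t) F := by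
  refine Or.inl ⟨Finset.erase_ssubset ht.1, fun x hx y hyF hy => ?_⟩
  have hyt : y = t := by
    by_contra h
    exact hy (Finset.mem_erase.2 ⟨h, hyF⟩)
  exact hyt ▸ (ht.2 (Finset.mem_erase.1 hx).2).lt_of_ne (Finset.ne_of_mem_erase hx)

theorem subset_erase_of_lexLT (ht : IsGreatest (↑F : Set α) t) (hGF : LexLT G F)
    (hsub : G ⊆ F) : G ⊆ F.erase t := by
  rcases hGF with ⟨hss, hpre⟩ | ⟨d, hdG, hdF, -⟩
  · obtain ⟨y, hyF, hyG⟩ := Finset.exists_of_ssubset hss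
    intro x hx
    refine Finset.mem_erase.2 ⟨fun hxt => ?_, hsub hx⟩
    exact (hpre x hx y hyF hyG).not_ge (hxt ▸ ht.2 hyF)
  · exact absurd (hsub hdG) hdF

theorem insert_lexLT_of_not_subset (hGF : LexLT G F) (hsub : ¬ G ⊆ F) (hzF : z ∈ F)
    (hzG : z ∉ G) : LexLT (insert z G) F := by
  rcases hGF with ⟨hss, -⟩ | ⟨d, hdG, hdF, hagree, hy⟩
  · exact absurd hss.subset hsub
  have hdz : ¬ z < d := fun h => hzG ((hagree z h).2 hzF)
  refine Or.inr ⟨d, Finset.mem_insert_of_mem hdG, hdF, fun x hx => ?_, hy⟩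
  rw [Finset.mem_insert, hagree x hx]
  exact ⟨fun h => h.elim (fun hxz => absurd (hxz ▸ hx) hdz) id, Or.inr⟩

theorem insert_lexLT_of_forall_le (hGF : LexLT G F) (hzF : z ∈ F) (hzG : z ∉ G)
    (hmin : ∀ y ∈ F, y ∉ G → z ≤ y) (hne : insert z G ≠ F) : LexLT (insert z G) F := by
  by_cases hsub : G ⊆ F
  · rcases hGF with ⟨-, hpre⟩ | ⟨d, hdG, hdF, -⟩
    · refine Or.inl ⟨(Finset.insert_subset hzF hsub).ssubset_of_ne hne,
        fun x hx y hyF hy => ?_⟩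
      rw [Finset.mem_insert, not_or] at hy
      rcases Finset.mem_insert.1 hx with rfl | hxG
      · exact (hmin y hyF hy.2).lt_of_ne (Ne.symm hy.1)
      · exact hpre x hxG y hyF hy.2
    · exact absurd (hsub hdG) hdF
  · exact insert_lexLT_of_not_subset hGF hsub hzF hzG

end LexLTInsert

theorem card_pair_erase_singleton {α : Type*} [DecidableEq α] (F : Finset α) (t : α) :
    ({F.erase t, {t}} : Finset (Finset α)).card = 2 :=
  Finset.card_pair fun h => Finset.notMem_erase t F (h ▸ Finset.mem_singleton_self t)

end Finset

namespace SC

theorem ext {α : Type*} {Δ Γ : SC α} (hV : Δ.V = Γ.V) (hfaces : Δ.faces = Γ.faces) : Δ = Γ := by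
  cases Δ
  cases Γ
  subst hV hfaces
  rfl

section Map

variable {α β : Type*} [DecidableEq β]

def map (Γ : SC α) (f : α → β) : SC β where
  V := Γ.V.image f
  faces := Finset.image f '' Γ.faces
  nonempty_mem := by
    rintro _ ⟨F, hF, rfl⟩
    exact (Γ.nonempty_mem F hF).image f
  subset_V := by
    rintro _ ⟨F, hF, rfl⟩
    exact Finset.image_subset_image (Γ.subset_V F hF)
  down_closed := by
    rintro _ ⟨F, hF, rfl⟩ T hT hTne
    obtain ⟨S, hSF, rfl⟩ := Finset.subset_image_iff.1 hT
    exact ⟨S, Γ.down_closed F hF S hSF (Finset.image_nonempty.1 hTne), rfl⟩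
  singleton_mem := by
    intro y hy
    obtain ⟨x, hx, rfl⟩ := Finset.mem_image.1 hy
    exact ⟨{x}, Γ.singleton_mem x hx, Finset.image_singleton f x⟩

end Map

end SC

section Map

variable {α β : Type*} [DecidableEq α] [DecidableEq β] {f : α → β} {W : Finset α}

theorem image_stellarS (hf : Set.InjOn f W) {K : Set (Finset α)} (hK : ∀ G ∈ K, G ⊆ W)
    {E : Finset α} (hE : E ⊆ W) (v : α) :
    Finset.image f '' stellarS K E v = stellarS (Finset.image f '' K) (E.image f) (f v) := by
  have hsub : ∀ {s t : Finset α}, s ⊆ W → t ⊆ W → (s.image f ⊆ t.image f ↔ s ⊆ t) :=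
    Finset.image_subset_image_iff_of_injOn hf
  ext X
  constructor
  · rintro ⟨Y, ⟨hYK, hEY⟩ | ⟨S, T, hSE, hT, rfl⟩, rfl⟩
    · exact Or.inl ⟨⟨Y, hYK, rfl⟩, fun h => hEY ((hsub hE (hK Y hYK)).1 h)⟩
    refine Or.inr ⟨S.image f, T.image f, ?_, ?_, by
      rw [Finset.image_insert, Finset.image_union]⟩
    · have hSW := hSE.subset.trans hE
      exact ⟨(hsub hSW hE).2 hSE.subset, fun h => hSE.not_subset ((hsub hE hSW).1 h)⟩
    rcases hT with ⟨hTne, hTE, hTEK⟩ | rfl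
    · have hTEW := hK _ hTEK
      refine Or.inl ⟨hTne.image f, ?_, ⟨T ∪ E, hTEK, Finset.image_union T E⟩⟩
      rw [← Finset.image_inter_of_injOn T E (hf.mono (by exact_mod_cast hTEW)), hTE,
        Finset.image_empty]
    · exact Or.inr (Finset.image_empty f)
  · rintro (⟨⟨Y, hYK, rfl⟩, hEY⟩ | ⟨S', T', hSE', hT', rfl⟩)
    · exact ⟨Y, Or.inl ⟨hYK, fun h => hEY (Finset.image_subset_image h)⟩, rfl⟩
    obtain ⟨S, hSE, rfl⟩ := Finset.subset_image_iff.1 hSE'.subset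
    have hSE : S ⊂ E := hSE.ssubset_of_ne fun h => hSE'.ne (h ▸ rfl)
    suffices ∃ T, (T ∈ lkS K E ∨ T = ∅) ∧ T.image f = T' from
      let ⟨T, hT, hTT'⟩ := this
      ⟨insert v (S ∪ T), Or.inr ⟨S, T, hSE, hT, rfl⟩,
        by rw [Finset.image_insert, Finset.image_union, hTT']⟩
    rcases hT' with ⟨hTne', hTE', Z, hZK, hZ⟩ | rfl
    · obtain ⟨T, hTZ, rfl⟩ := Finset.subset_image_iff.1
        ((Finset.subset_union_left).trans hZ.symm.subset)
      have hZW := hK Z hZK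
      refine ⟨T, Or.inl ⟨Finset.image_nonempty.1 hTne', ?_, ?_⟩, rfl⟩
      · rw [← Finset.image_eq_empty (f := f), ← Finset.subset_empty, ← hTE']
        exact Finset.image_inter_subset f T E
      · have hTEW : T ∪ E ⊆ W := Finset.union_subset (hTZ.trans hZW) hE
        rwa [← (Finset.image_eq_image_iff_of_injOn hf hZW hTEW).1
          (by rw [Finset.image_union, hZ])]
    · exact ⟨∅, Or.inr rfl, Finset.image_empty f⟩

theorem IsStellar.map {Γ Γ' : SC α} {E : Finset α} {v : α} (h : IsStellar Γ Γ' E v)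
    (hf : Set.InjOn f Γ'.V) : IsStellar (Γ.map f) (Γ'.map f) (E.image f) (f v) := by
  obtain ⟨hE, hEcard, hv, hV, hfaces⟩ := h
  have hΓ : Γ.V ⊆ Γ'.V := hV ▸ Finset.subset_insert v Γ.V
  have hvV : v ∈ Γ'.V := hV ▸ Finset.mem_insert_self v Γ.V
  refine ⟨⟨E, hE, rfl⟩, ?_, ?_, ?_, ?_⟩
  · rwa [Finset.card_image_of_injOn (hf.mono (by exact_mod_cast (Γ.subset_V E hE).trans hΓ))]
  · rintro hfv
    obtain ⟨x, hx, hxv⟩ := Finset.mem_image.1 hfv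
    exact hv (hf (by exact_mod_cast hΓ hx) (by exact_mod_cast hvV) hxv ▸ hx)
  · change Γ'.V.image f = insert (f v) (Γ.V.image f)
    rw [hV, Finset.image_insert]
  · change Finset.image f '' Γ'.faces = stellarS (Finset.image f '' Γ.faces) (E.image f) (f v)
    rw [hfaces]
    exact image_stellarS hf (fun G hG => (Γ.subset_V G hG).trans hΓ)
      ((Γ.subset_V E hE).trans hΓ) v

theorem IsEdgeSubdivOf.map {Γ Γ' : SC α} (h : IsEdgeSubdivOf Γ Γ') (hf : Set.InjOn f Γ'.V) :
    IsEdgeSubdivOf (Γ.map f) (Γ'.map f) := by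
  obtain ⟨E, v, hE, hst⟩ := h
  have hst' := hst.map hf
  exact ⟨E.image f, f v, le_antisymm (Finset.card_image_le.trans_eq hE) hst'.2.1, hst'⟩

theorem SC.isomS_map [Nonempty α] {Γ : SC α} (hf : Set.InjOn f Γ.V) :
    IsomS (Γ.map f).faces ↑(Γ.map f).V Γ.faces ↑Γ.V := by
  have hbij : Set.BijOn f Γ.V (f '' Γ.V) := hf.bijOn_image
  have hinv := hbij.invOn_invFunOn
  have hbij' := hbij.symm hinv.symm
  refine ⟨Function.invFunOn f Γ.V, ?_, fun T hT => ?_⟩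
  · rwa [show ((Γ.map f).V : Set β) = f '' Γ.V from Finset.coe_image]
  · have hT' : ↑T ⊆ f '' Γ.V := by rwa [← Finset.coe_image]
    have hTV : T.image (Function.invFunOn f Γ.V) ⊆ Γ.V := by
      intro x hx
      obtain ⟨y, hy, rfl⟩ := Finset.mem_image.1 hx
      exact_mod_cast hbij'.mapsTo (hT' hy)
    have hTeq : (T.image (Function.invFunOn f Γ.V)).image f = T := by
      rw [Finset.image_image]
      exact (Finset.image_congr fun y hy => hinv.2.eq (hT' hy)).trans Finset.image_id
    constructor
    · rintro ⟨S, hS, rfl⟩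
      rwa [(Finset.image_eq_image_iff_of_injOn hf hTV (Γ.subset_V S hS)).1 hTeq]
    · exact fun h => ⟨_, h, hTeq⟩

end Map

theorem IsChain.finsetSup_mem {β : Type*} [SemilatticeSup β] [OrderBot β] {C : Finset β}
    (hC : IsChain (· ≤ ·) (↑C : Set β)) (hne : C.Nonempty) : C.sup id ∈ C := by
  rw [← Finset.sup'_eq_sup hne]
  refine Finset.sup'_mem (↑C) (fun x hx y hy => ?_) C hne id fun i hi => hi
  rcases eq_or_ne x y with rfl | hxy
  · rwa [sup_idem]
  · rcases hC hx hy hxy with h | h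
    · rwa [sup_of_le_right h]
    · rwa [sup_of_le_left h]

section PartialBary

variable {α : Type*} [DecidableEq α]

def supNotContaining (X : Finset (Finset α)) (H : Finset α) : Finset α :=
  (X.filter fun G => ¬ H ⊆ G).sup id

variable {X Y : Finset (Finset α)} {G H : Finset α}

theorem mem_supNotContaining {x : α} :
    x ∈ supNotContaining X H ↔ ∃ G ∈ X, ¬ H ⊆ G ∧ x ∈ G := by
  simp [supNotContaining, Finset.mem_sup, and_assoc]

theorem subset_supNotContaining (hG : G ∈ X) (hHG : ¬ H ⊆ G) : G ⊆ supNotContaining X H :=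
  fun _ hx => mem_supNotContaining.2 ⟨G, hG, hHG, hx⟩

theorem supNotContaining_mono (hXY : X ⊆ Y) : supNotContaining X H ⊆ supNotContaining Y H :=
  Finset.sup_mono (Finset.filter_subset_filter _ hXY)

theorem supNotContaining_insert_of_subset (hHG : H ⊆ G) :
    supNotContaining (insert G X) H = supNotContaining X H := by
  rw [supNotContaining, Finset.filter_insert, if_neg (not_not.2 hHG), supNotContaining]

theorem supNotContaining_subset_sup : supNotContaining X H ⊆ X.sup id :=
  Finset.sup_mono (Finset.filter_subset _ X)

namespace SC

variable (Δ : SC α)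

/-- `X` is a face of the complex obtained from `Δ` by subdividing at the faces in `A`. The
vertex `{x}` stands for the vertex `x` of `Δ` and `G ∈ A` for the barycenter of `G`; a subdivided
face `H ∈ A` must not be covered by the vertices of `X` that do not lie above it. -/
structure IsPartialBaryFace (A X : Finset (Finset α)) : Prop where
  subset : X ⊆ Δ.V.image singleton ∪ A
  isChain : IsChain (· ⊆ ·) (↑(X ∩ A) : Set (Finset α))
  sup_mem : X.sup id ∈ Δ.faces
  not_subset : ∀ H ∈ A, ¬ H ⊆ supNotContaining X H

variable {Δ} {A : Finset (Finset α)}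

namespace IsPartialBaryFace

theorem mem_or_mem (h : Δ.IsPartialBaryFace A X) (hG : G ∈ X) :
    (∃ x ∈ Δ.V, {x} = G) ∨ G ∈ A := by
  simpa using h.subset hG

theorem nonempty_of_mem (h : Δ.IsPartialBaryFace A X) (hA : ∀ G ∈ A, G ∈ Δ.faces)
    (hG : G ∈ X) : G.Nonempty := by
  rcases h.mem_or_mem hG with ⟨x, -, rfl⟩ | hGA
  exacts [Finset.singleton_nonempty x, Δ.nonempty_mem G (hA G hGA)]

theorem mem_faces_of_subset_sup (h : Δ.IsPartialBaryFace A X) (hG : G ⊆ X.sup id)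
    (hne : G.Nonempty) : G ∈ Δ.faces :=
  Δ.down_closed _ h.sup_mem G hG hne

theorem nonempty (h : Δ.IsPartialBaryFace A X) : X.Nonempty := by
  rw [Finset.nonempty_iff_ne_empty]
  rintro rfl
  simpa using Δ.nonempty_mem _ h.sup_mem

theorem mem_faces (h : Δ.IsPartialBaryFace A X) (hA : ∀ G ∈ A, G ∈ Δ.faces) (hG : G ∈ X) :
    G ∈ Δ.faces :=
  h.mem_faces_of_subset_sup (Finset.le_sup (f := id) hG) (h.nonempty_of_mem hA hG)

theorem singleton_mem_of_mem_supNotContaining (h : Δ.IsPartialBaryFace A X) {s : α}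
    (hs : s ∈ supNotContaining X H) (hsA : s ∉ supNotContaining (X ∩ A) H) : {s} ∈ X := by
  obtain ⟨K, hK, hHK, hsK⟩ := mem_supNotContaining.1 hs
  rcases h.mem_or_mem hK with ⟨x, -, rfl⟩ | hKA
  · rwa [Finset.mem_singleton.1 hsK]
  · exact absurd (subset_supNotContaining (Finset.mem_inter.2 ⟨hK, hKA⟩) hHK hsK) hsA

theorem mono (h : Δ.IsPartialBaryFace A X) (hA : ∀ G ∈ A, G ∈ Δ.faces) (hYX : Y ⊆ X)
    (hY : Y.Nonempty) : Δ.IsPartialBaryFace A Y := by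
  obtain ⟨G, hG⟩ := hY
  refine ⟨hYX.trans h.subset, h.isChain.mono (by gcongr), ?_, fun H hH hsub =>
    h.not_subset H hH (hsub.trans (supNotContaining_mono hYX))⟩
  exact h.mem_faces_of_subset_sup (Finset.sup_mono hYX)
    ((h.nonempty_of_mem hA (hYX hG)).mono (Finset.le_sup (f := id) hG))

theorem insert_mem_faces (h : Δ.IsPartialBaryFace A X) {z : α} (hz : {z} ∈ X) (hG : G ∈ X) :
    insert z G ∈ Δ.faces :=
  h.mem_faces_of_subset_sup (Finset.insert_subset
    (Finset.le_sup (f := id) hz (Finset.mem_singleton_self z)) (Finset.le_sup (f := id) hG))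
    (Finset.insert_nonempty z G)

theorem insert_notMem (h : Δ.IsPartialBaryFace A X) {z : α} (hz : {z} ∈ X) (hG : G ∈ X)
    (hzG : z ∉ G) (hGne : G.Nonempty) : insert z G ∉ A := by
  intro hA
  obtain ⟨y, hy⟩ := hGne
  have hz' : ¬ insert z G ⊆ {z} := fun hsub =>
    hzG (Finset.mem_singleton.1 (hsub (Finset.mem_insert_of_mem hy)) ▸ hy)
  have hG' : ¬ insert z G ⊆ G := fun hsub => hzG (hsub (Finset.mem_insert_self z G))
  exact h.not_subset _ hA (Finset.insert_subset
    (subset_supNotContaining hz hz' (Finset.mem_singleton_self z))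
    (subset_supNotContaining hG hG'))

theorem of_insert {F : Finset α} (h : Δ.IsPartialBaryFace (insert F A) X) (hFX : F ∉ X) :
    Δ.IsPartialBaryFace A X where
  subset G hG := by
    rcases Finset.mem_union.1 (h.subset hG) with hG' | hG'
    · exact Finset.mem_union_left _ hG'
    · exact Finset.mem_union_right _
        ((Finset.mem_insert.1 hG').resolve_left fun hGF => hFX (hGF ▸ hG))
  isChain := h.isChain.mono (by gcongr; exact Finset.subset_insert F A)
  sup_mem := h.sup_mem
  not_subset H hH := h.not_subset H (Finset.mem_insert_of_mem hH)

theorem insert {F : Finset α} (h : Δ.IsPartialBaryFace A X) (hFX : F ∉ X)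
    (hF : ¬ F ⊆ supNotContaining X F) : Δ.IsPartialBaryFace (insert F A) X where
  subset := h.subset.trans (by gcongr; exact Finset.subset_insert F A)
  isChain := by rw [Finset.inter_insert_of_notMem hFX]; exact h.isChain
  sup_mem := h.sup_mem
  not_subset H hH := by
    rcases Finset.mem_insert.1 hH with rfl | hH
    exacts [hF, h.not_subset H hH]

end IsPartialBaryFace

theorem isPartialBaryFace_singleton (hA : ∀ G ∈ A, G ∈ Δ.faces)
    {v : Finset α} (hv : v ∈ Δ.V.image singleton ∪ A) : Δ.IsPartialBaryFace A {v} := by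
  refine ⟨Finset.singleton_subset_iff.2 hv,
    ((Set.subsingleton_singleton (a := v)).anti
      (by rw [← Finset.coe_singleton]; exact Finset.coe_subset.2 Finset.inter_subset_left)).isChain,
    ?_, fun H hH hsub => ?_⟩
  · rw [Finset.sup_singleton, id]
    rcases Finset.mem_union.1 hv with hv | hv
    · obtain ⟨x, hx, rfl⟩ := Finset.mem_image.1 hv
      exact Δ.singleton_mem x hx
    · exact hA v hv
  · obtain ⟨x, hx⟩ := Δ.nonempty_mem H (hA H hH)
    obtain ⟨G, hG, hHG, -⟩ := mem_supNotContaining.1 (hsub hx)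
    rw [Finset.mem_singleton] at hG
    subst hG
    exact hHG (hsub.trans (supNotContaining_subset_sup.trans (by simp)))

def partialBary (A : Finset (Finset α)) (hA : ∀ G ∈ A, G ∈ Δ.faces) : SC (Finset α) where
  V := Δ.V.image singleton ∪ A
  faces := {X | Δ.IsPartialBaryFace A X}
  nonempty_mem _ hX := hX.nonempty
  subset_V _ hX := hX.subset
  down_closed _ hX _ hYX hY := hX.mono hA hYX hY
  singleton_mem _ hv := isPartialBaryFace_singleton hA hv

theorem partialBary_congr {A A' : Finset (Finset α)} (h : A = A') {hA : ∀ G ∈ A, G ∈ Δ.faces}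
    {hA' : ∀ G ∈ A', G ∈ Δ.faces} : Δ.partialBary A hA = Δ.partialBary A' hA' := by
  subst h
  rfl

end SC

end PartialBary

namespace SC

section BigFaces

variable {α : Type*} (Δ : SC α)

open Classical in
noncomputable def bigFaces : Finset (Finset α) :=
  Δ.V.powerset.filter fun F => F ∈ Δ.faces ∧ 2 ≤ F.card

variable {Δ} {F : Finset α}

theorem mem_bigFaces : F ∈ Δ.bigFaces ↔ F ∈ Δ.faces ∧ 2 ≤ F.card := by
  simp only [bigFaces, Finset.mem_filter, Finset.mem_powerset, and_iff_right_iff_imp]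
  exact fun h => Δ.subset_V F h.1

theorem coe_bigFaces : (↑Δ.bigFaces : Set (Finset α)) = {F ∈ Δ.faces | 2 ≤ F.card} := by
  ext F
  exact mem_bigFaces

theorem mem_faces_of_mem_bigFaces (hF : F ∈ Δ.bigFaces) : F ∈ Δ.faces :=
  (mem_bigFaces.1 hF).1

end BigFaces

section Step

variable {α : Type*} [LinearOrder α] (Δ : SC α)

structure IsStep (A : Finset (Finset α)) (F : Finset α) (t : α) : Prop where
  mem_bigFaces : F ∈ Δ.bigFaces
  isGreatest : IsGreatest (↑F : Set α) t
  mem_iff : ∀ H, H ∈ A ↔ H ∈ Δ.bigFaces ∧ H.LexLT F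

namespace IsStep

variable {Δ} {A X Y : Finset (Finset α)} {F G H : Finset α} {t : α}

theorem mem_faces (hs : Δ.IsStep A F t) : F ∈ Δ.faces :=
  mem_faces_of_mem_bigFaces hs.mem_bigFaces

theorem two_le_card (hs : Δ.IsStep A F t) : 2 ≤ F.card :=
  (SC.mem_bigFaces.1 hs.mem_bigFaces).2

theorem two_le_card_of_mem (hs : Δ.IsStep A F t) (hH : H ∈ A) : 2 ≤ H.card :=
  (SC.mem_bigFaces.1 ((hs.mem_iff H).1 hH).1).2

theorem notMem (hs : Δ.IsStep A F t) : F ∉ A :=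
  fun h => Finset.LexLT.irrefl F ((hs.mem_iff F).1 h).2

theorem not_subset_singleton (hs : Δ.IsStep A F t) (hH : H ∈ A) (x : α) : ¬ H ⊆ {x} :=
  fun h => by
    have h1 := Finset.card_le_card h
    rw [Finset.card_singleton] at h1
    have := hs.two_le_card_of_mem hH
    omega

end IsStep

end Step

variable {α : Type*} [DecidableEq α] [LinearOrder α] {Δ : SC α}

namespace IsStep

variable {A X Y : Finset (Finset α)} {F G H : Finset α} {t : α}

theorem notMem_vertices (hs : Δ.IsStep A F t) : F ∉ Δ.V.image singleton ∪ A := by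
  rw [Finset.mem_union, not_or, Finset.mem_image]
  refine ⟨?_, hs.notMem⟩
  rintro ⟨x, -, rfl⟩
  simpa using hs.two_le_card

theorem insert_erase (hs : Δ.IsStep A F t) : insert t (F.erase t) = F :=
  Finset.insert_erase hs.isGreatest.1

theorem subset_erase_of_mem (hs : Δ.IsStep A F t) (hH : H ∈ A) (hHF : H ⊆ F) :
    H ⊆ F.erase t :=
  Finset.subset_erase_of_lexLT hs.isGreatest ((hs.mem_iff H).1 hH).2 hHF

theorem erase_mem_or_eq_singleton (hs : Δ.IsStep A F t) :
    F.erase t ∈ A ∨ ∃ p ∈ F, F.erase t = {p} := by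
  have hcard : (F.erase t).card = F.card - 1 := Finset.card_erase_of_mem hs.isGreatest.1
  have h2 := hs.two_le_card
  by_cases hP : 2 ≤ (F.erase t).card
  · refine Or.inl ((hs.mem_iff _).2 ⟨SC.mem_bigFaces.2 ⟨?_, hP⟩,
      Finset.lexLT_erase_of_isGreatest hs.isGreatest⟩)
    exact Δ.down_closed F hs.mem_faces _ (Finset.erase_subset t F)
      (Finset.card_pos.1 (by omega))
  · obtain ⟨p, hp⟩ := Finset.card_eq_one.1 (by omega : (F.erase t).card = 1)
    exact Or.inr ⟨p, Finset.mem_of_mem_erase (hp ▸ Finset.mem_singleton_self p), hp⟩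

theorem edge_sup (hs : Δ.IsStep A F t) :
    ({F.erase t, {t}} : Finset (Finset α)).sup id = F := by
  rw [Finset.sup_insert, Finset.sup_singleton, id, id, Finset.sup_eq_union, Finset.union_comm, ← Finset.insert_eq,
    hs.insert_erase]

theorem edge_isPartialBaryFace (hs : Δ.IsStep A F t) :
    Δ.IsPartialBaryFace A {F.erase t, {t}} := by
  refine ⟨Finset.insert_subset ?_ (Finset.singleton_subset_iff.2 ?_), ?_,
    by rw [hs.edge_sup]; exact hs.mem_faces, fun H hH hsub => ?_⟩
  · rcases hs.erase_mem_or_eq_singleton with hPA | ⟨p, hpF, hp⟩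
    · exact Finset.mem_union_right _ hPA
    · rw [hp]
      exact Finset.mem_union_left _
        (Finset.mem_image_of_mem _ (Δ.subset_V F hs.mem_faces hpF))
  · exact Finset.mem_union_left _
      (Finset.mem_image_of_mem _ (Δ.subset_V F hs.mem_faces hs.isGreatest.1))
  · refine ((Set.subsingleton_singleton (a := F.erase t)).anti fun G hG => ?_).isChain
    obtain ⟨hG, hGA⟩ := Finset.mem_inter.1 hG
    rcases Finset.mem_insert.1 hG with rfl | hG
    · rfl
    · rw [Finset.mem_singleton.1 hG] at hGA
      exact absurd subset_rfl (hs.not_subset_singleton hGA t)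
  · have hHP := hs.subset_erase_of_mem hH
      (hsub.trans (supNotContaining_subset_sup.trans hs.edge_sup.subset))
    obtain ⟨x, hx⟩ := Δ.nonempty_mem H (mem_faces_of_mem_bigFaces ((hs.mem_iff H).1 hH).1)
    obtain ⟨K, hK, hHK, hxK⟩ := mem_supNotContaining.1 (hsub hx)
    rcases Finset.mem_insert.1 hK with rfl | hK
    · exact hHK hHP
    · rw [Finset.mem_singleton.1 hK, Finset.mem_singleton] at hxK
      exact Finset.notMem_erase t F (hxK ▸ hHP hx)

theorem not_lexLT_insert (hs : Δ.IsStep A F t) (hY : Δ.IsPartialBaryFace A Y) {z : α}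
    (hz : {z} ∈ Y) (hG : G ∈ Y) (hGA : G ∈ A) (hzG : z ∉ G) : ¬ (insert z G).LexLT F := by
  intro hlt
  have hG2 := hs.two_le_card_of_mem hGA
  refine hY.insert_notMem hz hG hzG (Finset.card_pos.1 (by omega)) ((hs.mem_iff _).2
    ⟨SC.mem_bigFaces.2 ⟨hY.insert_mem_faces hz hG, ?_⟩, hlt⟩)
  rw [Finset.card_insert_of_notMem hzG]
  omega

theorem subset_supNotContaining_of_edge_subset (hs : Δ.IsStep A F t)
    (hE : {F.erase t, {t}} ⊆ X) : F ⊆ supNotContaining X F := by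
  rw [← hs.edge_sup]
  refine Finset.sup_le fun K hK => subset_supNotContaining (hE hK) ?_
  rw [hs.edge_sup]
  rcases Finset.mem_insert.1 hK with rfl | hK
  · exact fun h => Finset.notMem_erase t F (h hs.isGreatest.1)
  · rw [Finset.mem_singleton.1 hK]
    exact fun h => by simpa using (Finset.card_le_card h).trans' hs.two_le_card

theorem edge_subset_of_subset_supNotContaining (hs : Δ.IsStep A F t)
    (hX : Δ.IsPartialBaryFace A X) (hF : F ⊆ supNotContaining X F) :
    {F.erase t, {t}} ⊆ X := by
  obtain ⟨G, hGdef⟩ : ∃ G, supNotContaining (X ∩ A) F = G := ⟨_, rfl⟩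
  have hsing : ∀ s ∈ F, s ∉ G → {s} ∈ X :=
    fun s hsF hsG => hX.singleton_mem_of_mem_supNotContaining (hF hsF) (hGdef ▸ hsG)
  rcases ((X ∩ A).filter fun G => ¬ F ⊆ G).eq_empty_or_nonempty with hB | hB
  · have hsing' : ∀ s ∈ F, {s} ∈ X :=
      fun s hsF => hsing s hsF (by simp [← hGdef, supNotContaining, hB])
    refine Finset.insert_subset ?_ (Finset.singleton_subset_iff.2 (hsing' t hs.isGreatest.1))
    rcases hs.erase_mem_or_eq_singleton with hPA | ⟨p, hpF, hp⟩
    · refine absurd (fun x hx => ?_) (hX.not_subset _ hPA)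
      exact subset_supNotContaining (hsing' x (Finset.mem_of_mem_erase hx))
        (hs.not_subset_singleton hPA x) (Finset.mem_singleton_self x)
    · exact hp ▸ hsing' p hpF
  have hGmem : supNotContaining (X ∩ A) F ∈ (X ∩ A).filter fun G => ¬ F ⊆ G :=
    IsChain.finsetSup_mem (hX.isChain.mono (Finset.coe_subset.2 (Finset.filter_subset _ _))) hB
  rw [hGdef, Finset.mem_filter] at hGmem
  obtain ⟨hGXA, hFG⟩ := hGmem
  obtain ⟨hGX, hGA⟩ := Finset.mem_inter.1 hGXA
  obtain ⟨s, hs', hmin⟩ := (F \ G).exists_min_image id (Finset.sdiff_nonempty.2 hFG)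
  obtain ⟨hsF, hsG⟩ := Finset.mem_sdiff.1 hs'
  have hsX := hsing s hsF hsG
  have hFeq : insert s G = F := by
    by_contra hne
    exact hs.not_lexLT_insert hX hsX hGX hGA hsG (Finset.insert_lexLT_of_forall_le
      ((hs.mem_iff G).1 hGA).2 hsF hsG (fun y hyF hyG => hmin y (Finset.mem_sdiff.2 ⟨hyF, hyG⟩))
      hne)
  have htG : t ∉ G := fun htG => Finset.notMem_erase t F
    (hs.subset_erase_of_mem hGA (hFeq ▸ Finset.subset_insert s G) htG)
  have hst : s = t := by
    have ht := Finset.mem_coe.1 hs.isGreatest.1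
    rw [← hFeq, Finset.mem_insert] at ht
    exact (ht.resolve_right htG).symm
  subst hst
  rw [← hFeq, Finset.erase_insert hsG]
  exact Finset.insert_subset hGX (Finset.singleton_subset_iff.2 hsX)

theorem subset_or_subset_erase (hs : Δ.IsStep A F t) (hY : Δ.IsPartialBaryFace A Y)
    (hE : {F.erase t, {t}} ⊆ Y) (hG : G ∈ Y) (hGA : G ∈ A) : F ⊆ G ∨ G ⊆ F.erase t := by
  by_cases hGF : G ⊆ F
  · exact Or.inr (hs.subset_erase_of_mem hGA hGF)
  by_cases hFG : F ⊆ G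
  · exact Or.inl hFG
  exfalso
  have hP : F.erase t ∈ Y := hE (Finset.mem_insert_self _ _)
  have ht : {t} ∈ Y := hE (Finset.mem_insert_of_mem (Finset.mem_singleton_self _))
  obtain ⟨z, hzF, hzG, hzY⟩ : ∃ z ∈ F, z ∉ G ∧ {z} ∈ Y := by
    by_cases htG : t ∈ G
    · have hPG : ¬ F.erase t ⊆ G :=
        fun h => hFG (hs.insert_erase ▸ Finset.insert_subset htG h)
      rcases hs.erase_mem_or_eq_singleton with hPA | ⟨p, hpF, hp⟩
      · have hne : G ≠ F.erase t := fun h => hGF (h ▸ Finset.erase_subset t F)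
        rcases hY.isChain (Finset.mem_inter.2 ⟨hG, hGA⟩) (Finset.mem_inter.2 ⟨hP, hPA⟩) hne
          with h | h
        exacts [absurd (h.trans (Finset.erase_subset t F)) hGF, absurd h hPG]
      · exact ⟨p, hpF, fun h => hPG (hp ▸ Finset.singleton_subset_iff.2 h), hp ▸ hP⟩
    · exact ⟨t, hs.isGreatest.1, htG, ht⟩
  exact hs.not_lexLT_insert hY hzY hG hGA hzG
    (Finset.insert_lexLT_of_not_subset ((hs.mem_iff G).1 hGA).2 hGF hzF hzG)

end IsStep

end SC

namespace SC.IsStep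

variable {α : Type*} [DecidableEq α] [LinearOrder α] {Δ : SC α}
  {A X Y : Finset (Finset α)} {F H : Finset α} {t : α}

theorem not_edge_subset (hs : Δ.IsStep A F t) (hX : Δ.IsPartialBaryFace (insert F A) X) :
    ¬ {F.erase t, {t}} ⊆ X :=
  fun hE => hX.not_subset F (Finset.mem_insert_self F A)
    (hs.subset_supNotContaining_of_edge_subset hE)

theorem isPartialBaryFace_insert_of_not_edge_subset (hs : Δ.IsStep A F t)
    (hX : Δ.IsPartialBaryFace A X) (hE : ¬ {F.erase t, {t}} ⊆ X) :
    Δ.IsPartialBaryFace (insert F A) X :=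
  hX.insert (fun hFX => hs.notMem_vertices (hX.subset hFX))
    fun hF => hE (hs.edge_subset_of_subset_supNotContaining hX hF)

theorem subset_supNotContaining_of_subset_erase_union_edge (hs : Δ.IsStep A F t)
    (hFX : F ∈ X) (hH : H ∈ A)
    (hsub : H ⊆ supNotContaining (X.erase F ∪ {F.erase t, {t}}) H) :
    H ⊆ supNotContaining X H := by
  intro x hx
  obtain ⟨K, hK, hHK, hxK⟩ := mem_supNotContaining.1 (hsub hx)
  rcases Finset.mem_union.1 hK with hK | hK
  · exact subset_supNotContaining (Finset.mem_of_mem_erase hK) hHK hxK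
  by_cases hHF : H ⊆ F
  · have hHP := hs.subset_erase_of_mem hH hHF
    rcases Finset.mem_insert.1 hK with rfl | hK
    · exact absurd hHP hHK
    · rw [Finset.mem_singleton.1 hK, Finset.mem_singleton] at hxK
      exact absurd (hxK ▸ hHP hx) (Finset.notMem_erase t F)
  · exact subset_supNotContaining hFX hHF
      (hs.edge_sup.subset (Finset.le_sup (f := id) hK hxK))

theorem isPartialBaryFace_erase_union_edge (hs : Δ.IsStep A F t)
    (hX : Δ.IsPartialBaryFace (insert F A) X) (hFX : F ∈ X) :
    Δ.IsPartialBaryFace A (X.erase F ∪ {F.erase t, {t}}) := by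
  have hE := hs.edge_isPartialBaryFace
  have hcomp : ∀ G ∈ X.erase F, G ∈ A → F ⊆ G ∨ G ⊆ F.erase t := by
    intro G hG hGA
    obtain ⟨hGF, hGX⟩ := Finset.mem_erase.1 hG
    rcases hX.isChain (Finset.mem_inter.2 ⟨hGX, Finset.mem_insert_of_mem hGA⟩)
      (Finset.mem_inter.2 ⟨hFX, Finset.mem_insert_self F A⟩) hGF with h | h
    exacts [Or.inr (hs.subset_erase_of_mem hGA h), Or.inl h]
  refine ⟨Finset.union_subset (fun G hG => ?_) hE.subset, ?_, ?_, fun H hH hsub =>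
    hX.not_subset H (Finset.mem_insert_of_mem hH)
      (hs.subset_supNotContaining_of_subset_erase_union_edge hFX hH hsub)⟩
  · obtain ⟨hGF, hGX⟩ := Finset.mem_erase.1 hG
    rcases Finset.mem_union.1 (hX.subset hGX) with h | h
    · exact Finset.mem_union_left _ h
    · exact Finset.mem_union_right _ ((Finset.mem_insert.1 h).resolve_left hGF)
  · refine IsChain.mono (t := insert (F.erase t) ↑(X.erase F ∩ A)) (fun G hG => ?_)
      ((hX.isChain.mono ?_).insert fun G hG _ => ?_)
    · obtain ⟨hG, hGA⟩ := Finset.mem_inter.1 hG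
      rcases Finset.mem_union.1 hG with hG | hG
      · exact Set.mem_insert_of_mem _ (Finset.mem_inter.2 ⟨hG, hGA⟩)
      · rcases Finset.mem_insert.1 hG with rfl | hG
        · exact Set.mem_insert _ _
        · rw [Finset.mem_singleton.1 hG] at hGA
          exact absurd subset_rfl (hs.not_subset_singleton hGA t)
    · exact Finset.coe_subset.2
        (Finset.inter_subset_inter (Finset.erase_subset F X) (Finset.subset_insert F A))
    · obtain ⟨hG, hGA⟩ := Finset.mem_inter.1 hG
      exact (hcomp G hG hGA).imp (Finset.erase_subset t F).trans id
  · have hXsup := Finset.sup_insert (f := id) (b := F) (s := X.erase F)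
    rw [Finset.insert_erase hFX, id] at hXsup
    rw [Finset.sup_union, hs.edge_sup, sup_comm, ← hXsup]
    exact hX.sup_mem

theorem supNotContaining_insert_subset (hs : Δ.IsStep A F t) (hH : H ∈ A)
    (hXY : X ⊆ Y) (hEY : {F.erase t, {t}} ⊆ Y) :
    supNotContaining (insert F X) H ⊆ supNotContaining Y H := by
  intro x hx
  obtain ⟨K, hK, hHK, hxK⟩ := mem_supNotContaining.1 hx
  rcases Finset.mem_insert.1 hK with rfl | hK
  · rw [← hs.insert_erase, Finset.mem_insert] at hxK
    rcases hxK with rfl | hxP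
    · exact subset_supNotContaining (hEY (Finset.mem_insert_of_mem
        (Finset.mem_singleton_self _))) (hs.not_subset_singleton hH x) (Finset.mem_singleton_self x)
    · exact subset_supNotContaining (hEY (Finset.mem_insert_self _ _))
        (fun h => hHK (h.trans (Finset.erase_subset t K))) hxP
  · exact subset_supNotContaining (hXY hK) hHK hxK

theorem isPartialBaryFace_insert_cone (hs : Δ.IsStep A F t) (hA : ∀ G ∈ A, G ∈ Δ.faces)
    {S T : Finset (Finset α)} (hY : Δ.IsPartialBaryFace A (T ∪ {F.erase t, {t}}))
    (hSE : S ⊂ {F.erase t, {t}}) (hTE : T ∩ {F.erase t, {t}} = ∅) :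
    Δ.IsPartialBaryFace (insert F A) (insert F (S ∪ T)) := by
  have hSTY : S ∪ T ⊆ T ∪ {F.erase t, {t}} :=
    Finset.union_subset (hSE.subset.trans Finset.subset_union_right) Finset.subset_union_left
  have hEY : {F.erase t, {t}} ⊆ T ∪ {F.erase t, {t}} := Finset.subset_union_right
  refine ⟨Finset.insert_subset (Finset.mem_union_right _ (Finset.mem_insert_self F A))
    (hSTY.trans (hY.subset.trans (by gcongr; exact Finset.subset_insert F A))), ?_, ?_,
    fun H hH => ?_⟩
  · have hsub : insert F (S ∪ T) ∩ insert F A ⊆ insert F ((T ∪ {F.erase t, {t}}) ∩ A) := by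
      rw [← Finset.insert_inter_distrib]
      exact Finset.insert_subset_insert F (Finset.inter_subset_inter hSTY subset_rfl)
    rw [← Finset.coe_subset, Finset.coe_insert] at hsub
    refine (hY.isChain.insert fun G hG _ => ?_).mono hsub
    obtain ⟨hG, hGA⟩ := Finset.mem_inter.1 hG
    exact (hs.subset_or_subset_erase hY hEY hG hGA).imp id
      fun h => h.trans (Finset.erase_subset t F)
  · refine hY.mem_faces_of_subset_sup ?_ ⟨t, ?_⟩
    · rw [Finset.sup_insert]
      exact sup_le (hs.edge_sup.symm.le.trans (Finset.sup_mono hEY)) (Finset.sup_mono hSTY)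
    · rw [Finset.sup_insert]
      exact Finset.mem_union_left _ hs.isGreatest.1
  rcases Finset.mem_insert.1 hH with rfl | hHA
  · rw [supNotContaining_insert_of_subset subset_rfl]
    intro hsub
    rcases (S ∪ T).eq_empty_or_nonempty with h0 | hne
    · rw [h0] at hsub
      simpa [supNotContaining] using hsub hs.isGreatest.1
    · refine hSE.not_subset fun K hK => ?_
      rcases Finset.mem_union.1 (hs.edge_subset_of_subset_supNotContaining
        (hY.mono hA hSTY hne) hsub hK) with h | h
      · exact h
      · exact absurd (Finset.mem_inter.2 ⟨h, hK⟩) (hTE ▸ Finset.notMem_empty K)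
  · exact fun hsub => hY.not_subset H hHA
      (hsub.trans (hs.supNotContaining_insert_subset hHA hSTY hEY))

theorem isStellar (hs : Δ.IsStep A F t) (hA : ∀ G ∈ A, G ∈ Δ.faces)
    (hA' : ∀ G ∈ insert F A, G ∈ Δ.faces) :
    IsStellar (Δ.partialBary A hA) (Δ.partialBary (insert F A) hA') {F.erase t, {t}} F := by
  refine ⟨hs.edge_isPartialBaryFace, (Finset.card_pair_erase_singleton F t).ge,
    hs.notMem_vertices, Finset.union_insert F _ A, Set.ext fun X => ⟨fun hX => ?_, ?_⟩⟩
  · change Δ.IsPartialBaryFace (insert F A) X at hX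
    by_cases hFX : F ∈ X
    · refine Or.inr ⟨X.erase F ∩ {F.erase t, {t}}, X.erase F \ {F.erase t, {t}},
        Finset.inter_subset_right.ssubset_of_ne fun h => hs.not_edge_subset hX ?_, ?_, ?_⟩
      · exact h ▸ Finset.inter_subset_left.trans (Finset.erase_subset F X)
      · rcases (X.erase F \ {F.erase t, {t}}).eq_empty_or_nonempty with h | h
        · exact Or.inr h
        · refine Or.inl ⟨h, Finset.sdiff_inter_self _ _, ?_⟩
          rw [Finset.sdiff_union_self_eq_union]
          exact hs.isPartialBaryFace_erase_union_edge hX hFX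
      · rw [Finset.union_comm, Finset.sdiff_union_inter, Finset.insert_erase hFX]
    · exact Or.inl ⟨hX.of_insert hFX, hs.not_edge_subset hX⟩
  · rintro (⟨hX, hEX⟩ | ⟨S, T, hSE, ⟨-, hTE, hTEX⟩ | rfl, rfl⟩)
    · exact hs.isPartialBaryFace_insert_of_not_edge_subset hX hEX
    · exact hs.isPartialBaryFace_insert_cone hA hTEX hSE hTE
    · exact hs.isPartialBaryFace_insert_cone hA (by simpa using hs.edge_isPartialBaryFace) hSE
        (Finset.empty_inter _)

end SC.IsStep

namespace SC

variable {α : Type*} [DecidableEq α] {Δ : SC α} {X : Finset (Finset α)}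

theorem mem_vertices_bigFaces {G : Finset α} (hG : G ∈ Δ.faces) :
    G ∈ Δ.V.image singleton ∪ Δ.bigFaces := by
  rcases le_or_gt 2 G.card with h2 | h2
  · exact Finset.mem_union_right _ (mem_bigFaces.2 ⟨hG, h2⟩)
  · obtain ⟨x, rfl⟩ := Finset.card_eq_one.1
      (by have := (Δ.nonempty_mem G hG).card_pos; omega : G.card = 1)
    exact Finset.mem_union_left _
      (Finset.mem_image_of_mem _ (Δ.subset_V _ hG (Finset.mem_singleton_self x)))

theorem coe_vertices_bigFaces :
    (↑(Δ.V.image singleton ∪ Δ.bigFaces) : Set (Finset α)) = Δ.faces := by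
  ext G
  refine ⟨fun hG => ?_, mem_vertices_bigFaces⟩
  rcases Finset.mem_union.1 hG with hG | hG
  · obtain ⟨x, hx, rfl⟩ := Finset.mem_image.1 hG
    exact Δ.singleton_mem x hx
  · exact mem_faces_of_mem_bigFaces hG

theorem isPartialBaryFace_bigFaces_iff :
    Δ.IsPartialBaryFace Δ.bigFaces X ↔ X ∈ barycentricFaces Δ.faces := by
  constructor
  · intro h
    have hA : ∀ G ∈ Δ.bigFaces, G ∈ Δ.faces := fun G => mem_faces_of_mem_bigFaces
    have hsing : ∀ {x : α} {G : Finset α}, {x} ∈ X → G ∈ X → {x} ⊆ G := by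
      intro x G hx hG
      rw [Finset.singleton_subset_iff]
      by_contra hxG
      have hGne := h.nonempty_of_mem hA hG
      refine h.insert_notMem hx hG hxG hGne (mem_bigFaces.2 ⟨h.insert_mem_faces hx hG, ?_⟩)
      rw [Finset.card_insert_of_notMem hxG]
      have := hGne.card_pos
      omega
    refine ⟨h.nonempty, fun G hG => h.mem_faces hA hG, fun G hG G' hG' hne => ?_⟩
    rcases h.mem_or_mem hG with ⟨x, -, rfl⟩ | hGA
    · exact Or.inl (hsing hG hG')
    rcases h.mem_or_mem hG' with ⟨x, -, rfl⟩ | hGA'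
    · exact Or.inr (hsing hG' hG)
    exact h.isChain (Finset.mem_inter.2 ⟨hG, hGA⟩) (Finset.mem_inter.2 ⟨hG', hGA'⟩) hne
  · rintro ⟨hne, hXK, hchain⟩
    refine ⟨fun G hG => mem_vertices_bigFaces (hXK hG),
      hchain.mono (Finset.coe_subset.2 Finset.inter_subset_left),
      hXK (IsChain.finsetSup_mem hchain hne), fun H hH hsub => ?_⟩
    rcases (X.filter fun G => ¬ H ⊆ G).eq_empty_or_nonempty with hB | hB
    · obtain ⟨x, hx⟩ := Δ.nonempty_mem H (mem_faces_of_mem_bigFaces hH)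
      simpa [supNotContaining, hB] using hsub hx
    · exact (Finset.mem_filter.1 (IsChain.finsetSup_mem
        (hchain.mono (Finset.coe_subset.2 (Finset.filter_subset _ _))) hB)).2 hsub

theorem isomS_map_partialBary_bigFaces {e : Finset α → α}
    (he : Set.InjOn e ↑(Δ.V.image singleton ∪ Δ.bigFaces))
    (hA : ∀ G ∈ Δ.bigFaces, G ∈ Δ.faces) :
    IsomS ((Δ.partialBary Δ.bigFaces hA).map e).faces ↑((Δ.partialBary Δ.bigFaces hA).map e).V
      (barycentricFaces Δ.faces) Δ.faces := by
  have h := isomS_map (Γ := Δ.partialBary Δ.bigFaces hA) he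
  rwa [show (Δ.partialBary Δ.bigFaces hA).faces = barycentricFaces Δ.faces from
    Set.ext fun _ => isPartialBaryFace_bigFaces_iff, show ((Δ.partialBary Δ.bigFaces hA).V : Set _)
    = Δ.faces from coe_vertices_bigFaces] at h

theorem map_partialBary_empty {e : Finset α → α} (he : ∀ x, e {x} = x)
    (hA : ∀ G ∈ (∅ : Finset (Finset α)), G ∈ Δ.faces) : (Δ.partialBary ∅ hA).map e = Δ := by
  have himage : ∀ T : Finset α, (T.image singleton).image e = T :=
    fun T => by simp [Finset.image_image, Function.comp_def, he]
  have hsup : ∀ T : Finset α, (T.image singleton).sup id = T :=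
    fun T => by rw [Finset.sup_image, Function.id_comp, Finset.sup_singleton_eq_self]
  refine SC.ext (by simp [map, partialBary, himage]) (Set.ext fun F => ⟨?_, fun hF => ?_⟩)
  · rintro ⟨X, hX, rfl⟩
    obtain ⟨T, -, rfl⟩ := Finset.subset_image_iff.1 (hX.subset.trans (Finset.union_empty _).le)
    rw [himage, ← hsup T]
    exact hX.sup_mem
  · refine ⟨F.image singleton, ⟨?_, by simp, by rwa [hsup], by simp⟩, himage F⟩
    exact (Finset.image_subset_image (Δ.subset_V F hF)).trans Finset.subset_union_left

end SC

theorem List.Pairwise.mem_take_iff {β : Type*} {r : β → β → Prop}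
    (hr : ∀ a b, r a b → ¬ r b a) {l : List β} (hl : l.Pairwise r) {j : ℕ} (hj : j < l.length)
    {a : β} : a ∈ l.take j ↔ a ∈ l ∧ r a l[j] := by
  have hlt := List.pairwise_iff_getElem.1 hl
  constructor
  · intro ha
    obtain ⟨i, hi, rfl⟩ := List.mem_take_iff_getElem.1 ha
    exact ⟨List.getElem_mem _, hlt i j _ hj (lt_of_lt_of_le hi (min_le_left _ _))⟩
  · rintro ⟨ha, har⟩
    obtain ⟨i, hi, rfl⟩ := List.mem_iff_getElem.1 ha
    refine List.mem_take_iff_getElem.2 ⟨i, lt_min ?_ hi, rfl⟩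
    by_contra hji
    rcases (not_lt.1 hji).lt_or_eq with hji | rfl
    exacts [hr _ _ har (hlt j i hj hi hji), hr _ _ har har]

namespace SC

variable {α : Type*} [DecidableEq α] [LinearOrder α]

theorem exists_isStep_sequence (Δ : SC α) :
    ∃ A : ℕ → Finset (Finset α), A 0 = ∅ ∧ A Δ.bigFaces.card = Δ.bigFaces ∧
      (∀ j, A j ⊆ Δ.bigFaces) ∧
      ∀ j < Δ.bigFaces.card, ∃ F t, Δ.IsStep (A j) F t ∧ A (j + 1) = insert F (A j) := by
  classical
  set L := Δ.bigFaces.sort Finset.LexLE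
  have hL : L.Pairwise Finset.LexLT :=
    ((Finset.pairwise_sort _ _).and (Finset.sort_nodup _ _)).imp fun h => h.1.resolve_right h.2
  have hmem : ∀ H, H ∈ L ↔ H ∈ Δ.bigFaces := fun H => Finset.mem_sort _
  have hlen : L.length = Δ.bigFaces.card := Finset.length_sort _
  refine ⟨fun j => (L.take j).toFinset, by simp, ?_,
    fun j H hH => (hmem H).1 (List.mem_of_mem_take (List.mem_toFinset.1 hH)), fun j hj => ?_⟩
  · show (L.take Δ.bigFaces.card).toFinset = Δ.bigFaces
    rw [← hlen, List.take_length, Finset.sort_toFinset]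
  rw [← hlen] at hj
  have hF := (hmem _).1 (List.getElem_mem hj)
  have hFne : L[j].Nonempty := Finset.card_pos.1 (by have := (mem_bigFaces.1 hF).2; omega)
  refine ⟨L[j], L[j].max' hFne, ⟨hF, Finset.isGreatest_max' _ _, fun H => ?_⟩, ?_⟩
  · rw [List.mem_toFinset, hL.mem_take_iff (fun _ _ h => h.asymm) hj, hmem]
  · ext H
    simp only [List.take_add_one, List.getElem?_eq_getElem hj, Option.toList_some,
      List.mem_toFinset, List.mem_append, List.mem_singleton, Finset.mem_insert]
    tauto

end SC

theorem exists_injOn_singleton_eq {α : Type*} [Infinite α] (W : Finset (Finset α)) :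
    ∃ e : Finset α → α, (∀ x, e {x} = x) ∧ Set.InjOn e W := by
  classical
  have : Infinite {y // y ∉ W.sup id} := (W.sup id).finite_toSet.infinite_compl.to_subtype
  let fresh : Finset α → {y // y ∉ W.sup id} := fun G =>
    Infinite.natEmbedding _ (if hG : G ∈ W then W.equivFin ⟨G, hG⟩ else 0)
  have hfresh : Set.InjOn fresh W := fun G hG G' hG' h => by
    rw [Finset.mem_coe] at hG hG'
    simpa [fresh, hG, hG', Fin.val_inj] using h
  have hW : ∀ {x G}, G ∈ W → G = {x} → x ∈ W.sup id := fun hG hGx =>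
    Finset.mem_sup.2 ⟨_, hG, hGx ▸ Finset.mem_singleton_self _⟩
  refine ⟨fun G => if h : ∃ x, G = {x} then h.choose else fresh G, fun x => ?_,
    fun G hG G' hG' heq => ?_⟩
  · have h : ∃ y, ({x} : Finset α) = {y} := ⟨x, rfl⟩
    dsimp only
    rw [dif_pos h]
    exact (Finset.singleton_injective h.choose_spec).symm
  · by_cases h : ∃ x, G = {x} <;> by_cases h' : ∃ x, G' = {x} <;>
      simp only [h, h', dite_true, dite_false] at heq
    · rw [h.choose_spec, h'.choose_spec, heq]
    · exact absurd (heq ▸ hW hG h.choose_spec) (fresh G').2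
    · exact absurd (heq ▸ hW hG' h'.choose_spec) (fresh G).2
    · exact hfresh hG hG' (Subtype.ext heq)

/-- Every finite simplicial complex `Δ` can be transformed into (a complex
isomorphic to) its barycentric subdivision by a sequence of edge subdivisions, whose
length equals the number of faces of `Δ` of cardinality at least 2. -/
theorem edge_subdivisions_to_barycentric {α : Type*} [DecidableEq α] [Infinite α]
    (Δ : SC α) :
    ∃ (m : ℕ) (D : ℕ → SC α),
      D 0 = Δ ∧
      (∀ i < m, IsEdgeSubdivOf (D i) (D (i + 1))) ∧
      m = {F ∈ Δ.faces | 2 ≤ F.card}.ncard ∧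
      IsomS (D m).faces ↑(D m).V (barycentricFaces Δ.faces) Δ.faces := by
  let _ : LinearOrder α := IsWellOrder.linearOrder WellOrderingRel
  obtain ⟨A, hA0, hAm, hAsub, hstep⟩ := Δ.exists_isStep_sequence
  have hA : ∀ j, ∀ G ∈ A j, G ∈ Δ.faces :=
    fun j G hG => SC.mem_faces_of_mem_bigFaces (hAsub j hG)
  obtain ⟨e, he, heinj⟩ := exists_injOn_singleton_eq (Δ.V.image singleton ∪ Δ.bigFaces)
  have heinj' : ∀ {A'} (hA' : ∀ G ∈ A', G ∈ Δ.faces), A' ⊆ Δ.bigFaces →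
      Set.InjOn e (Δ.partialBary A' hA').V :=
    fun _ hsub => heinj.mono (Finset.coe_subset.2 (Finset.union_subset_union_right hsub))
  refine ⟨Δ.bigFaces.card, fun j => (Δ.partialBary (A j) (hA j)).map e, ?_, fun j hj => ?_,
    ?_, ?_⟩
  · dsimp only
    rw [Δ.partialBary_congr hA0 (hA' := by simp)]
    exact SC.map_partialBary_empty he _
  · obtain ⟨F, t, hs, hsucc⟩ := hstep j hj
    have hA' : ∀ G ∈ insert F (A j), G ∈ Δ.faces := hsucc ▸ hA (j + 1)
    dsimp only
    rw [Δ.partialBary_congr hsucc (hA' := hA')]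
    exact IsEdgeSubdivOf.map ⟨_, F, Finset.card_pair_erase_singleton F t,
      hs.isStellar (hA j) hA'⟩ (heinj' hA' (hsucc ▸ hAsub (j + 1)))
  · rw [← SC.coe_bigFaces, Set.ncard_coe_finset]
  · dsimp only
    rw [Δ.partialBary_congr hAm (hA' := fun G => SC.mem_faces_of_mem_bigFaces)]
    exact SC.isomS_map_partialBary_bigFaces heinj _
end

section
/- Let Δ be a finite flag simplicial complex and e an edge of Δ. Then the edge subdivision of Δ at e is flag. -/
/-!
A missing face `M` of the subdivision `Γ` either contains the new vertex `v` or not.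
If `v ∈ M`, then `N = M \ {v}` is a face of `Δ` not containing `e`, and every edge `{v, x}`
with `x ∈ N \ e` forces `e ∪ {x}` to be a face of `Δ`; so `N ∪ e` is a clique of `Δ`, hence a
face by flagness, and then `M = N ∪ {v}` is a face of `Γ`, unless `M = {v, x}` is an edge.
If `v ∉ M`, the proper faces of `M` are faces of `Δ`; `M` itself cannot be a face of `Δ`,
since it would have to contain `e`, while removing a vertex of `M \ e` (one exists as
`|M| > 2 = |e|`) leaves a face of `Γ` containing `e`. So `M` is a missing face of `Δ`.
-/

open Finset

section

variable {α : Type*} [DecidableEq α]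

namespace SC

theorem pair_mem_faces (Δ : SC α) {G : Finset α} (hG : G ∈ Δ.faces) {x y : α}
    (hx : x ∈ G) (hy : y ∈ G) : ({x, y} : Finset α) ∈ Δ.faces :=
  Δ.down_closed G hG _ (insert_subset hx (singleton_subset_iff.2 hy)) (insert_nonempty _ _)

end SC

namespace IsFlag

variable {Δ : SC α}

theorem mem_faces_of_forall_pair_mem (hΔ : IsFlag Δ) {P : Finset α} (hP : P.Nonempty)
    (hpairs : ∀ x ∈ P, ∀ y ∈ P, ({x, y} : Finset α) ∈ Δ.faces) : P ∈ Δ.faces := by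
  induction P using Finset.strongInduction with
  | _ P ih =>
    rcases hP.exists_eq_singleton_or_nontrivial with ⟨x, rfl⟩ | hPnt
    · simpa using hpairs x (mem_singleton_self x) x (mem_singleton_self x)
    by_contra hPf
    have hmiss : Missing Δ.faces P :=
      ⟨one_lt_card_iff_nontrivial.2 hPnt, hPf, fun T hT hTne =>
        ih T hT hTne fun x hx y hy => hpairs x (hT.1 hx) y (hT.1 hy)⟩
    obtain ⟨a, b, -, rfl⟩ := card_eq_two.1 (hΔ P hmiss)
    exact hPf (hpairs a (mem_insert_self a _) b (mem_insert_of_mem (mem_singleton_self b)))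

theorem union_mem_faces (hΔ : IsFlag Δ) {N F : Finset α} (hN : N ∈ Δ.faces)
    (hF : F ∈ Δ.faces) (hNF : ∀ x ∈ N, insert x F ∈ Δ.faces) : N ∪ F ∈ Δ.faces := by
  refine hΔ.mem_faces_of_forall_pair_mem ((Δ.nonempty_mem N hN).mono subset_union_left) ?_
  intro x hx y hy
  rcases mem_union.1 hx, mem_union.1 hy with ⟨hxN | hxF, hyN | hyF⟩
  · exact Δ.pair_mem_faces hN hxN hyN
  · exact Δ.pair_mem_faces (hNF x hxN) (mem_insert_self x F) (mem_insert_of_mem hyF)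
  · exact Δ.pair_mem_faces (hNF y hyN) (mem_insert_of_mem hxF) (mem_insert_self y F)
  · exact Δ.pair_mem_faces hF hxF hyF

end IsFlag

section stellarS

variable {K : Set (Finset α)} {F T : Finset α} {v : α}

theorem mem_and_not_subset_of_mem_stellarS (hT : T ∈ stellarS K F v) (hvT : v ∉ T) :
    T ∈ K ∧ ¬ F ⊆ T := by
  rcases hT with hT | ⟨S, T', -, -, rfl⟩
  · exact hT
  · exact absurd (mem_insert_self v _) hvT

theorem insert_mem_stellarS (v : α) (hTF : T ∪ F ∈ K) (hFT : ¬ F ⊆ T) :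
    insert v T ∈ stellarS K F v := by
  refine Or.inr ⟨T ∩ F, T \ F, ⟨inter_subset_right, fun h => hFT (h.trans inter_subset_left)⟩,
    ?_, (congrArg (insert v) (sup_inf_sdiff T F)).symm⟩
  rcases (T \ F).eq_empty_or_nonempty with h | h
  · exact Or.inr h
  · exact Or.inl ⟨h, sdiff_inter_self F T, by rwa [sdiff_union_self_eq_union]⟩

theorem SC.insert_mem_faces_of_pair_mem_stellarS (Δ : SC α) (hF : F ∈ Δ.faces)
    (hv : v ∉ Δ.V) {x : α} (hxv : x ≠ v) (hvx : {v, x} ∈ stellarS Δ.faces F v) :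
    insert x F ∈ Δ.faces := by
  rcases hvx with ⟨hvxΔ, -⟩ | ⟨S, T, hSF, hT, hST⟩
  · exact absurd (Δ.subset_V _ hvxΔ (mem_insert_self v _)) hv
  have hx : x ∈ S ∪ T := by
    have : x ∈ insert v (S ∪ T) := hST ▸ mem_insert_of_mem (mem_singleton_self x)
    exact (mem_insert.1 this).resolve_left hxv
  have hTF : T ∪ F ∈ Δ.faces := by
    rcases hT with ⟨-, -, hTF⟩ | rfl
    · exact hTF
    · rwa [empty_union]
  refine Δ.down_closed _ hTF _ (insert_subset ?_ subset_union_right) (insert_nonempty _ _)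
  rcases mem_union.1 hx with hxS | hxT
  · exact mem_union_right T (hSF.1 hxS)
  · exact mem_union_left F hxT

end stellarS

namespace IsStellar

variable {Δ Γ : SC α} {F M : Finset α} {v : α}

theorem card_eq_two_of_missing_of_mem (hΔ : IsFlag Δ) (h : IsStellar Δ Γ F v)
    (hM : Missing Γ.faces M) (hvM : v ∈ M) : M.card = 2 := by
  obtain ⟨hF, -, hv, -, hΓ⟩ := h
  obtain ⟨hMcard, hMnot, hMsub⟩ := hM
  by_contra hne
  set N := M.erase v
  have hNΓ : N ∈ stellarS Δ.faces F v :=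
    hΓ ▸ hMsub N (erase_ssubset hvM) (card_pos.1 (by rw [card_erase_of_mem hvM]; omega))
  obtain ⟨hN, hFN⟩ := mem_and_not_subset_of_mem_stellarS hNΓ (notMem_erase v M)
  have hstar : ∀ x ∈ N, insert x F ∈ Δ.faces := by
    intro x hx
    have hvx : {v, x} ⊂ M := by
      refine ⟨insert_subset hvM (singleton_subset_iff.2 (mem_of_mem_erase hx)), fun hMvx => ?_⟩
      have := card_le_card hMvx
      have := card_le_two (a := v) (b := x)
      omega
    exact Δ.insert_mem_faces_of_pair_mem_stellarS hF hv (ne_of_mem_erase hx)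
      (hΓ ▸ hMsub _ hvx (insert_nonempty _ _))
  apply hMnot
  rw [hΓ, ← insert_erase hvM]
  exact insert_mem_stellarS v (hΔ.union_mem_faces hN hF hstar) hFN

theorem missing_of_missing_of_notMem (h : IsStellar Δ Γ F v) (hM : Missing Γ.faces M)
    (hvM : v ∉ M) (hFM : F.card < M.card) : Missing Δ.faces M := by
  obtain ⟨-, -, -, -, hΓ⟩ := h
  obtain ⟨hMcard, hMnot, hMsub⟩ := hM
  have hsub : ∀ T ⊂ M, T.Nonempty → T ∈ Δ.faces ∧ ¬ F ⊆ T := fun T hT hTne =>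
    mem_and_not_subset_of_mem_stellarS (hΓ ▸ hMsub T hT hTne) fun hvT => hvM (hT.1 hvT)
  refine ⟨hMcard, fun hMΔ => ?_, fun T hT hTne => (hsub T hT hTne).1⟩
  have hFM' : F ⊆ M := by
    by_contra hFM'
    exact hMnot (hΓ ▸ Or.inl ⟨hMΔ, hFM'⟩)
  obtain ⟨x, hxM, hxF⟩ := not_subset.1 fun hMF => (card_le_card hMF).not_gt hFM
  refine (hsub _ (erase_ssubset hxM) (card_pos.1 ?_)).2 (subset_erase.2 ⟨hFM', hxF⟩)
  rw [card_erase_of_mem hxM]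
  omega

end IsStellar

end

/-- The edge subdivision of a flag simplicial complex is flag. -/
theorem edge_subdivision_of_flag_is_flag {α : Type*} [DecidableEq α]
    (Δ Γ : SC α) (hΔ : IsFlag Δ) (e : Finset α) (he : e.card = 2) (v : α)
    (h : IsStellar Δ Γ e v) :
    IsFlag Γ := by
  intro M hM
  by_cases hvM : v ∈ M
  · exact h.card_eq_two_of_missing_of_mem hΔ hM hvM
  by_contra hne
  have hcard : e.card < M.card := by have := hM.1; omega
  exact hne (hΔ M (h.missing_of_missing_of_notMem hM hvM hcard))
end

section
/- Let Δ be a finite simplicial complex on vertex set V, e = {a,b} an edge of Δ, v ∉ V a new vertex, and Γ the stellar subdivision of Δ at e with new vertex v. Then the missing faces of Γ are exactly the following sets: (1) the missing faces M of Δ with e ⊄ M; (2) the set {a,b}; (3) the sets {v,u} for vertices u ∈ V \ {a,b} with {a,b,u} ∉ Δ; and (4) the sets F ∪ {v} where F ⊆ V \ {a,b} with |F| ≥ 2, F ∈ Δ, F ∪ {a,b} ∉ Δ, and F'' ∪ {a,b} ∈ Δ for every proper subset F'' of F. -/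
/-!
A set through the new vertex `v` has the form `insert v G` with `v ∉ G`, and it is a face of
the stellar subdivision at `F` exactly when `F ⊄ G` and `G ∪ F` is a face of `Δ`. Hence the
missing faces through `v` are the cones `insert v G` over the faces `G` of `Δ` that are minimal
non-faces of the link of `F`, while the missing faces avoiding `v` are those of `Δ` not
containing `F`, together with `F` itself. For an edge `F = {a, b}` the first family splits
according to whether `G` is a vertex or has at least two elements.
-/

section

open Finset

variable {α : Type*} [DecidableEq α]

/-- `G` is a face of `K` and a minimal non-face of the link of `F`. -/
def MinimalNonLink (K : Set (Finset α)) (F G : Finset α) : Prop :=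
  G.Nonempty ∧ Disjoint G F ∧ G ∈ K ∧ G ∪ F ∉ K ∧ ∀ T ⊂ G, T ∪ F ∈ K

section Stellar

variable {K : Set (Finset α)} {F G M : Finset α} {v : α}

theorem mem_stellarS_iff_of_notMem (hvG : v ∉ G) :
    G ∈ stellarS K F v ↔ G ∈ K ∧ ¬F ⊆ G := by
  refine ⟨?_, Or.inl⟩
  rintro (hG | ⟨S, T, -, -, rfl⟩)
  · exact hG
  · exact absurd (mem_insert_self v _) hvG

theorem insert_mem_stellarS_iff (hF : F ∈ K) (hvK : ∀ T ∈ K, v ∉ T) (hvG : v ∉ G) :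
    insert v G ∈ stellarS K F v ↔ ¬F ⊆ G ∧ G ∪ F ∈ K := by
  constructor
  · rintro (⟨hK, -⟩ | ⟨S, T, hSF, hT, hGST⟩)
    · exact absurd (mem_insert_self v G) (hvK _ hK)
    have hTF : Disjoint T F ∧ T ∪ F ∈ K := by
      rcases hT with ⟨-, hdisj, hTF⟩ | rfl
      · exact ⟨disjoint_iff_inter_eq_empty.2 hdisj, hTF⟩
      · simpa using hF
    have hvS : v ∉ S := fun h => hvK F hF (hSF.subset h)
    have hvT : v ∉ T := fun h => hvK _ hTF.2 (mem_union_left F h)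
    obtain rfl : G = S ∪ T := by
      rw [← erase_insert hvG, hGST, erase_insert (by simp [hvS, hvT])]
    refine ⟨fun hFST => hSF.not_subset fun x hx => ?_, ?_⟩
    · exact (mem_union.1 (hFST hx)).resolve_right fun hxT => disjoint_left.1 hTF.1 hxT hx
    · rw [union_comm S T, union_assoc, union_eq_right.2 hSF.subset]
      exact hTF.2
  · rintro ⟨hFG, hGF⟩
    refine Or.inr ⟨G ∩ F, G \ F, ?_, ?_, by rw [union_comm, sdiff_union_inter]⟩
    · exact inter_subset_right.ssubset_of_not_subset fun h => hFG (h.trans inter_subset_left)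
    · by_cases hne : (G \ F).Nonempty
      · exact Or.inl ⟨hne, sdiff_inter_self F G, by rwa [sdiff_union_self_eq_union]⟩
      · exact Or.inr (not_nonempty_iff_eq_empty.1 hne)

variable (hF : F ∈ K) (hdown : ∀ G ∈ K, ∀ T ⊆ G, T.Nonempty → T ∈ K)
include hF hdown

theorem missing_stellarS_iff_of_notMem (hF2 : 2 ≤ F.card) (hvM : v ∉ M) :
    Missing (stellarS K F v) M ↔ (Missing K M ∧ ¬F ⊆ M) ∨ M = F := by
  have hmem : ∀ T ⊆ M, T ∈ stellarS K F v ↔ T ∈ K ∧ ¬F ⊆ T :=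
    fun T hT => mem_stellarS_iff_of_notMem fun h => hvM (hT h)
  constructor
  · rintro ⟨hc, hM, hsub⟩
    by_cases hFM : F ⊆ M
    · refine Or.inr (by_contra fun hne => ?_)
      have hFΓ := hsub F (hFM.ssubset_of_ne (Ne.symm hne)) (card_pos.1 (by omega))
      exact ((hmem F hFM).1 hFΓ).2 subset_rfl
    · refine Or.inl ⟨⟨hc, fun h => hM ((hmem M subset_rfl).2 ⟨h, hFM⟩), ?_⟩, hFM⟩
      exact fun T hT hne => ((hmem T hT.subset).1 (hsub T hT hne)).1
  · rintro (⟨⟨hc, hM, hsub⟩, hFM⟩ | rfl)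
    · refine ⟨hc, fun h => hM ((hmem M subset_rfl).1 h).1, fun T hT hne => ?_⟩
      exact (hmem T hT.subset).2 ⟨hsub T hT hne, fun h => hFM (h.trans hT.subset)⟩
    · refine ⟨hF2, fun h => ((hmem M subset_rfl).1 h).2 subset_rfl, fun T hT hne => ?_⟩
      exact (hmem T hT.subset).2 ⟨hdown M hF T hT.subset hne, hT.not_subset⟩

variable (hvK : ∀ T ∈ K, v ∉ T)
include hvK

theorem missing_insert_stellarS_iff (hFne : F.Nonempty) (hvG : v ∉ G) :
    Missing (stellarS K F v) (insert v G) ↔ MinimalNonLink K F G := by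
  constructor
  · rintro ⟨hc, hM, hsub⟩
    have hGne : G.Nonempty := by
      rw [card_insert_of_notMem hvG] at hc
      exact card_pos.1 (by omega)
    have hG := (mem_stellarS_iff_of_notMem hvG).1 (hsub G (ssubset_insert hvG) hGne)
    have hGF : G ∪ F ∉ K := fun h => hM ((insert_mem_stellarS_iff hF hvK hvG).2 ⟨hG.2, h⟩)
    have hlink : ∀ T ⊂ G, T ∪ F ∈ K := by
      intro T hT
      have hvT : v ∉ T := fun h => hvG (hT.subset h)
      have hTG : insert v T ⊂ insert v G := (insert_subset_insert v hT.subset).ssubset_of_ne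
        fun h => hT.ne (by rw [← erase_insert hvT, h, erase_insert hvG])
      exact ((insert_mem_stellarS_iff hF hvK hvT).1 (hsub _ hTG (insert_nonempty v T))).2
    refine ⟨hGne, ?_, hG.1, hGF, hlink⟩
    by_contra hGF'
    obtain ⟨x, hxG, hxF⟩ := not_disjoint_iff.1 hGF'
    have hsd : G \ F ⊂ G :=
      sdiff_subset.ssubset_of_not_subset fun h => (mem_sdiff.1 (h hxG)).2 hxF
    exact hGF (by rw [← sdiff_union_self_eq_union]; exact hlink _ hsd)
  · rintro ⟨hGne, hdisj, hG, hGF, hlink⟩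
    have hFT : ∀ T ⊆ G, ¬F ⊆ T := fun T hTG hFT =>
      hFne.ne_empty ((disjoint_self_iff_empty _).1 (hdisj.mono_left (hFT.trans hTG)))
    refine ⟨?_, fun h => hGF ((insert_mem_stellarS_iff hF hvK hvG).1 h).2, fun T hT hTne => ?_⟩
    · rw [card_insert_of_notMem hvG]
      have := hGne.card_pos
      omega
    by_cases hvT : v ∈ T
    · have hTG : T.erase v ⊂ G := by
        refine ssubset_of_subset_of_ne ?_ fun h => hT.ne (by rw [← insert_erase hvT, h])
        rw [← erase_insert hvG]
        exact erase_subset_erase v hT.subset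
      rw [← insert_erase hvT, insert_mem_stellarS_iff hF hvK (notMem_erase v T)]
      exact ⟨hFT _ hTG.subset, hlink _ hTG⟩
    · have hTG : T ⊆ G := (subset_insert_iff_of_notMem hvT).1 hT.subset
      exact (mem_stellarS_iff_of_notMem hvT).2 ⟨hdown G hG T hTG hTne, hFT T hTG⟩

theorem missing_stellarS_iff (hF2 : 2 ≤ F.card) :
    Missing (stellarS K F v) M ↔
      (Missing K M ∧ ¬F ⊆ M) ∨ M = F ∨ ∃ G, MinimalNonLink K F G ∧ M = insert v G := by
  by_cases hvM : v ∈ M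
  · have hMK : ¬Missing K M := by
      rintro ⟨hc, -, hsub⟩
      have hv : {v} ⊂ M := (singleton_subset_iff.2 hvM).ssubset_of_ne fun h => by
        rw [← h, card_singleton] at hc
        omega
      exact hvK _ (hsub {v} hv (singleton_nonempty v)) (mem_singleton_self v)
    have hMF : M ≠ F := fun h => hvK F hF (h ▸ hvM)
    rw [← insert_erase hvM, missing_insert_stellarS_iff hF hdown hvK (card_pos.1 (by omega))
      (notMem_erase v M), insert_erase hvM]
    refine ⟨fun h => Or.inr (Or.inr ⟨_, h, (insert_erase hvM).symm⟩), ?_⟩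
    rintro (⟨h, -⟩ | h | ⟨G, hG, rfl⟩)
    · exact absurd h hMK
    · exact absurd h hMF
    · rwa [erase_insert (hvK G hG.2.2.1)]
  · have hno : ¬∃ G, MinimalNonLink K F G ∧ M = insert v G := by
      rintro ⟨G, -, rfl⟩
      exact hvM (mem_insert_self v G)
    rw [missing_stellarS_iff_of_notMem hF hdown hF2 hvM]
    simp only [hno, or_false]

end Stellar

theorem exists_minimalNonLink_pair_iff (Δ : SC α) {a b : α} (v : α) (M : Finset α)
    (he : ({a, b} : Finset α) ∈ Δ.faces) :
    (∃ G, MinimalNonLink Δ.faces {a, b} G ∧ M = insert v G) ↔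
      (∃ u ∈ Δ.V, u ≠ a ∧ u ≠ b ∧ ({a, b, u} : Finset α) ∉ Δ.faces ∧
        M = ({v, u} : Finset α)) ∨
      (∃ F : Finset α, F ⊆ Δ.V ∧ a ∉ F ∧ b ∉ F ∧ 2 ≤ F.card ∧ F ∈ Δ.faces ∧
        F ∪ {a, b} ∉ Δ.faces ∧ (∀ F'' ⊂ F, F'' ∪ {a, b} ∈ Δ.faces) ∧
        M = F ∪ {v}) := by
  have hdisj : ∀ G : Finset α, Disjoint G {a, b} ↔ a ∉ G ∧ b ∉ G := by
    simp [disjoint_insert_right]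
  have hunion : ∀ u : α, ({u} ∪ {a, b} : Finset α) = {a, b, u} := by
    intro u
    ext
    simp only [mem_union, mem_insert, mem_singleton]
    tauto
  constructor
  · rintro ⟨G, ⟨hGne, hGe, hG, hGeK, hlink⟩, rfl⟩
    rw [hdisj] at hGe
    obtain ⟨u, rfl⟩ | hG2 := hGne.exists_eq_singleton_or_nontrivial
    · refine Or.inl ⟨u, Δ.subset_V _ hG (mem_singleton_self u), ?_, ?_, hunion u ▸ hGeK, rfl⟩
      · rintro rfl
        exact hGe.1 (mem_singleton_self u)
      · rintro rfl
        exact hGe.2 (mem_singleton_self u)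
    · refine Or.inr ⟨G, Δ.subset_V G hG, hGe.1, hGe.2, one_lt_card_iff_nontrivial.2 hG2, hG, hGeK,
        hlink, (union_singleton v G).symm⟩
  · rintro (⟨u, hu, hua, hub, hK, rfl⟩ | ⟨G, -, haG, hbG, hG2, hG, hGeK, hlink, rfl⟩)
    · refine ⟨{u}, ⟨singleton_nonempty u, (hdisj _).2 ?_, Δ.singleton_mem u hu, hunion u ▸ hK,
        fun T hT => ?_⟩, rfl⟩
      · simp [hua.symm, hub.symm]
      · rw [ssubset_singleton_iff.1 hT, empty_union]
        exact he
    · exact ⟨G, ⟨card_pos.1 (by omega), (hdisj G).2 ⟨haG, hbG⟩, hG, hGeK, hlink⟩,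
        union_singleton v G⟩

end

theorem missing_faces_of_edge_subdivision_general {α : Type*} [DecidableEq α]
    (Δ Γ : SC α) (a b : α) (v : α)
    (h : IsStellar Δ Γ {a, b} v) (M : Finset α) :
    Missing Γ.faces M ↔
      (Missing Δ.faces M ∧ ¬ ({a, b} : Finset α) ⊆ M) ∨
      M = ({a, b} : Finset α) ∨
      (∃ u ∈ Δ.V, u ≠ a ∧ u ≠ b ∧ ({a, b, u} : Finset α) ∉ Δ.faces ∧
        M = ({v, u} : Finset α)) ∨
      (∃ F : Finset α, F ⊆ Δ.V ∧ a ∉ F ∧ b ∉ F ∧ 2 ≤ F.card ∧ F ∈ Δ.faces ∧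
        F ∪ {a, b} ∉ Δ.faces ∧ (∀ F'' ⊂ F, F'' ∪ {a, b} ∈ Δ.faces) ∧
        M = F ∪ {v}) := by
  obtain ⟨he, hcard, hv, -, hfaces⟩ := h
  have hvK : ∀ T ∈ Δ.faces, v ∉ T := fun T hT hvT => hv (Δ.subset_V T hT hvT)
  rw [hfaces, missing_stellarS_iff he Δ.down_closed hvK hcard,
    exists_minimalNonLink_pair_iff Δ v M he]

/-- Description of the missing faces of the edge subdivision `Γ` of `Δ`
at the edge `e = {a,b}` with new vertex `v`. -/
theorem missing_faces_of_edge_subdivision {α : Type*} [DecidableEq α]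
    (Δ Γ : SC α) (a b : α) (hab : a ≠ b) (v : α)
    (h : IsStellar Δ Γ {a, b} v) (M : Finset α) :
    Missing Γ.faces M ↔
      (Missing Δ.faces M ∧ ¬ ({a, b} : Finset α) ⊆ M) ∨
      M = ({a, b} : Finset α) ∨
      (∃ u ∈ Δ.V, u ≠ a ∧ u ≠ b ∧ ({a, b, u} : Finset α) ∉ Δ.faces ∧
        M = ({v, u} : Finset α)) ∨
      (∃ F : Finset α, F ⊆ Δ.V ∧ a ∉ F ∧ b ∉ F ∧ 2 ≤ F.card ∧ F ∈ Δ.faces ∧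
        F ∪ {a, b} ∉ Δ.faces ∧ (∀ F'' ⊂ F, F'' ∪ {a, b} ∈ Δ.faces) ∧
        M = F ∪ {v}) :=
  missing_faces_of_edge_subdivision_general Δ Γ a b v h M
end

section
/- Let G be a finite simple graph on vertex set V, let Δ be the clique complex of G (the simplicial complex whose faces are the nonempty cliques of G), let {a,b} be an edge of G, and let v ∉ V. Let G' be the graph obtained from G by deleting the edge {a,b}, adding the new vertex v, and joining v to a, to b, and to every common neighbor of a and b in G. Then the clique complex of G' equals the stellar subdivision of Δ at {a,b} with new vertex v. -/
/-- The clique complex of a graph `G` on the vertex set `V`: faces are the nonempty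
subsets of `V` whose vertices are pairwise adjacent (singletons included). -/
def cliqueFaces {α : Type*} (G : SimpleGraph α) (V : Finset α) : Set (Finset α) :=
  {T | T.Nonempty ∧ T ⊆ V ∧ ∀ x ∈ T, ∀ y ∈ T, x ≠ y → G.Adj x y}

/-
A face of the clique complex of `G'` either avoids `v`, and then it is a clique of `G` that
does not contain both `a` and `b`, or it is `v` joined to a set `W`. Since `v` is adjacent
exactly to `a`, `b` and their common neighbours, the latter happens iff `W` does not contain
both `a` and `b` and `W ∪ {a, b}` is a clique of `G`. These are precisely the two kinds of faces
of the stellar subdivision at `{a, b}`: the faces of `Δ` not containing the edge, and the cones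
`v ∗ (S ∪ T)` with `S ⊊ {a, b}` and `T` empty or in the link of the edge, where `S = W ∩ {a, b}`
and `T = W \ {a, b}`.
-/

section Stellar

variable {α : Type*} [DecidableEq α] {K : Set (Finset α)} {F U W : Finset α} {v : α}

theorem mem_stellarS_of_notMem (hvU : v ∉ U) : U ∈ stellarS K F v ↔ U ∈ K ∧ ¬F ⊆ U := by
  refine ⟨fun h => h.resolve_right ?_, Or.inl⟩
  rintro ⟨S, T, -, -, rfl⟩
  exact hvU (Finset.mem_insert_self v _)

theorem insert_mem_stellarS_s8 (hF : F ∈ K) (hvK : ∀ T ∈ K, v ∉ T) (hvW : v ∉ W) :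
    insert v W ∈ stellarS K F v ↔ ¬F ⊆ W ∧ W ∪ F ∈ K := by
  constructor
  · rintro (⟨hK, -⟩ | ⟨S, T, hSF, hT, hWST⟩)
    · exact absurd (Finset.mem_insert_self v W) (hvK _ hK)
    obtain ⟨hTF, hTK⟩ : T ∩ F = ∅ ∧ T ∪ F ∈ K := by
      rcases hT with ⟨-, h⟩ | rfl
      · exact h
      · simpa using hF
    have hSTF : S ∪ T ∪ F = T ∪ F := by
      rw [Finset.union_comm S T, Finset.union_assoc, Finset.union_eq_right.2 hSF.subset]
    have hvST : v ∉ S ∪ T := fun h => hvK _ hTK (hSTF ▸ Finset.mem_union_left F h)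
    have hW : W = S ∪ T := by
      rw [← Finset.erase_insert hvW, hWST, Finset.erase_insert hvST]
    subst hW
    exact ⟨fun hFST => hSF.2 <|
      (Finset.disjoint_iff_inter_eq_empty.2 hTF).symm.left_le_of_le_sup_right hFST, hSTF ▸ hTK⟩
  · rintro ⟨hFW, hWF⟩
    refine Or.inr ⟨W ∩ F, W \ F, ?_, ?_, by rw [Finset.union_comm, Finset.sdiff_union_inter]⟩
    · exact ⟨Finset.inter_subset_right, fun h => hFW (h.trans Finset.inter_subset_left)⟩
    · rcases (W \ F).eq_empty_or_nonempty with h | h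
      · exact Or.inr h
      · exact Or.inl ⟨h, Finset.sdiff_inter_self F W, by rwa [Finset.sdiff_union_self_eq_union]⟩

end Stellar

namespace SimpleGraph

variable {α : Type*} {G : SimpleGraph α} {s : Set α} {a b : α}

theorem isClique_deleteEdges_pair_iff (hab : a ≠ b) :
    (G.deleteEdges {s(a, b)}).IsClique s ↔ G.IsClique s ∧ ¬(a ∈ s ∧ b ∈ s) := by
  refine ⟨fun h => ⟨h.mono (G.deleteEdges_le _), fun ⟨ha, hb⟩ => ?_⟩, fun ⟨h, hn⟩ => ?_⟩
  · exact (deleteEdges_adj.1 (h ha hb hab)).2 rfl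
  · intro x hx y hy hxy
    refine deleteEdges_adj.2 ⟨h hx hy hxy, fun hxy' => hn ?_⟩
    rcases Sym2.eq_iff.1 (Set.mem_singleton_iff.1 hxy') with ⟨rfl, rfl⟩ | ⟨rfl, rfl⟩
    · exact ⟨hx, hy⟩
    · exact ⟨hy, hx⟩

theorem isClique_union_pair_iff (hab : G.Adj a b) :
    G.IsClique (s ∪ {a, b}) ↔
      G.IsClique s ∧ ∀ x ∈ s, x = a ∨ x = b ∨ G.Adj a x ∧ G.Adj b x := by
  rw [Set.union_comm, Set.insert_union, Set.singleton_union, isClique_insert, isClique_insert]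
  simp only [Set.mem_insert_iff, forall_eq_or_imp, ne_eq]
  grind [G.adj_symm]

end SimpleGraph

section EdgeSubdivision

variable {α : Type*}

def IsEdgeSubdivisionGraph (G G' : SimpleGraph α) (a b v : α) : Prop :=
  ∀ x y, G'.Adj x y ↔
    ((G.Adj x y ∧ ¬(x = a ∧ y = b) ∧ ¬(x = b ∧ y = a)) ∨
     (x = v ∧ (y = a ∨ y = b ∨ (G.Adj a y ∧ G.Adj b y))) ∨
     (y = v ∧ (x = a ∨ x = b ∨ (G.Adj a x ∧ G.Adj b x))))

theorem mem_cliqueFaces {G : SimpleGraph α} {V U : Finset α} :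
    U ∈ cliqueFaces G V ↔ U.Nonempty ∧ U ⊆ V ∧ G.IsClique (U : Set α) :=
  Iff.rfl

theorem pair_mem_cliqueFaces [DecidableEq α] {G : SimpleGraph α} {V : Finset α} {a b : α}
    (hab : G.Adj a b) (ha : a ∈ V) (hb : b ∈ V) : {a, b} ∈ cliqueFaces G V := by
  refine mem_cliqueFaces.2
    ⟨Finset.insert_nonempty _ _, Finset.insert_subset ha (Finset.singleton_subset_iff.2 hb), ?_⟩
  rw [Finset.coe_pair, SimpleGraph.isClique_pair]
  exact fun _ => hab

namespace IsEdgeSubdivisionGraph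

variable {G G' : SimpleGraph α} {s : Set α} {a b v x y : α}
  (h : IsEdgeSubdivisionGraph G G' a b v)
include h

theorem adj_iff_of_ne (hx : x ≠ v) (hy : y ≠ v) :
    G'.Adj x y ↔ (G.deleteEdges {s(a, b)}).Adj x y := by
  rw [h x y, SimpleGraph.deleteEdges_adj, Set.mem_singleton_iff, Sym2.eq_iff]
  simp only [hx, hy, false_and, or_false, not_or]

theorem adj_new_iff (hvG : v ∉ G.support) (hx : x ≠ v) :
    G'.Adj v x ↔ x = a ∨ x = b ∨ G.Adj a x ∧ G.Adj b x := by
  have hvx : ¬G.Adj v x := fun hvx => hvG (G.mem_support.2 ⟨x, hvx⟩)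
  rw [h v x]
  simp only [hvx, hx, false_and, true_and, false_or, or_false]

theorem isClique_iff_of_notMem (hvs : v ∉ s) :
    G'.IsClique s ↔ (G.deleteEdges {s(a, b)}).IsClique s :=
  ⟨fun hc _ hx _ hy hxy => (h.adj_iff_of_ne (ne_of_mem_of_not_mem hx hvs)
      (ne_of_mem_of_not_mem hy hvs)).1 (hc hx hy hxy),
    fun hc _ hx _ hy hxy => (h.adj_iff_of_ne (ne_of_mem_of_not_mem hx hvs)
      (ne_of_mem_of_not_mem hy hvs)).2 (hc hx hy hxy)⟩

theorem isClique_insert_iff (hvG : v ∉ G.support) (hvs : v ∉ s) :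
    G'.IsClique (insert v s) ↔ (G.deleteEdges {s(a, b)}).IsClique s ∧
      ∀ x ∈ s, x = a ∨ x = b ∨ G.Adj a x ∧ G.Adj b x := by
  rw [SimpleGraph.isClique_insert, h.isClique_iff_of_notMem hvs]
  refine and_congr_right fun _ => forall₂_congr fun x hx => ?_
  have hxv : x ≠ v := ne_of_mem_of_not_mem hx hvs
  rw [h.adj_new_iff hvG hxv]
  exact ⟨fun h' => h' hxv.symm, fun h' _ => h'⟩

variable [DecidableEq α] {V U W : Finset α}

theorem mem_cliqueFaces_iff_of_notMem (hab : G.Adj a b) (hvU : v ∉ U) :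
    U ∈ cliqueFaces G' (insert v V) ↔ U ∈ cliqueFaces G V ∧ ¬{a, b} ⊆ U := by
  rw [mem_cliqueFaces, mem_cliqueFaces, Finset.subset_insert_iff_of_notMem hvU,
    h.isClique_iff_of_notMem (by simpa), SimpleGraph.isClique_deleteEdges_pair_iff hab.ne,
    Finset.insert_subset_iff, Finset.singleton_subset_iff]
  simp only [Finset.mem_coe]
  tauto

theorem insert_mem_cliqueFaces_iff (hab : G.Adj a b) (hvG : v ∉ G.support) (ha : a ∈ V)
    (hb : b ∈ V) (hvW : v ∉ W) :
    insert v W ∈ cliqueFaces G' (insert v V) ↔ ¬{a, b} ⊆ W ∧ W ∪ {a, b} ∈ cliqueFaces G V := by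
  have habV : {a, b} ⊆ V := Finset.insert_subset ha (Finset.singleton_subset_iff.2 hb)
  rw [mem_cliqueFaces, mem_cliqueFaces, Finset.insert_subset_insert_iff hvW, Finset.coe_insert,
    h.isClique_insert_iff hvG (by simpa), SimpleGraph.isClique_deleteEdges_pair_iff hab.ne,
    Finset.coe_union, Finset.coe_pair, SimpleGraph.isClique_union_pair_iff hab,
    Finset.union_subset_iff, Finset.union_nonempty, Finset.insert_subset_iff (t := W),
    Finset.singleton_subset_iff]
  simp only [Finset.mem_coe, Finset.insert_nonempty, habV, or_true, true_and, and_true]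
  tauto

end IsEdgeSubdivisionGraph

end EdgeSubdivision

/-- If `G'` is obtained from the graph `G` (on vertex set `V`) by deleting
the edge `{a,b}`, adding a new vertex `v ∉ V` and joining `v` to `a`, to `b`, and to
every common neighbor of `a` and `b`, then the clique complex of `G'` equals the stellar
subdivision of the clique complex of `G` at `{a,b}` with new vertex `v`. -/
theorem clique_complex_of_edge_subdivided_graph {α : Type*} [DecidableEq α]
    (G : SimpleGraph α) (V : Finset α) (hG : ∀ x y, G.Adj x y → x ∈ V ∧ y ∈ V)
    (a b : α) (hab : G.Adj a b) (v : α) (hv : v ∉ V)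
    (G' : SimpleGraph α)
    (hG' : ∀ x y, G'.Adj x y ↔
      ((G.Adj x y ∧ ¬(x = a ∧ y = b) ∧ ¬(x = b ∧ y = a)) ∨
       (x = v ∧ (y = a ∨ y = b ∨ (G.Adj a y ∧ G.Adj b y))) ∨
       (y = v ∧ (x = a ∨ x = b ∨ (G.Adj a x ∧ G.Adj b x))))) :
    cliqueFaces G' (insert v V) = stellarS (cliqueFaces G V) {a, b} v := by
  have h : IsEdgeSubdivisionGraph G G' a b v := hG'
  obtain ⟨ha, hb⟩ := hG a b hab
  have hvG : v ∉ G.support := fun ⟨w, hw⟩ => hv (hG v w hw).1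
  have hvK : ∀ T ∈ cliqueFaces G V, v ∉ T := fun _ hT hvT => hv (hT.2.1 hvT)
  ext U
  by_cases hvU : v ∈ U
  · obtain ⟨W, hvW, rfl⟩ : ∃ W, v ∉ W ∧ insert v W = U :=
      ⟨U.erase v, Finset.notMem_erase v U, Finset.insert_erase hvU⟩
    rw [h.insert_mem_cliqueFaces_iff hab hvG ha hb hvW,
      insert_mem_stellarS_s8 (pair_mem_cliqueFaces hab ha hb) hvK hvW]
  · rw [h.mem_cliqueFaces_iff_of_notMem hab hvU, mem_stellarS_of_notMem hvU]
end

section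
/- Let A and B be finite simplicial complexes on disjoint vertex sets, let σ ∈ A be a face with |σ| ≥ 2, and let v be a new vertex not in either vertex set. Then the stellar subdivision of the join A * B at σ with new vertex v equals the join of the stellar subdivision of A at σ (with new vertex v) with B; that is, stellar_{A*B}(σ) = stellar_A(σ) * B. -/
/-- The faces of the join of two collections of faces. -/
def joinFaces {α : Type*} [DecidableEq α] (K L : Set (Finset α)) : Set (Finset α) :=
  K ∪ L ∪ {U | ∃ S ∈ K, ∃ T ∈ L, U = S ∪ T}

/-!
The stellar subdivision at `σ` is the antistar of `σ` (faces not containing `σ`) together with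
the cone `v * ∂σ * lk σ`. Since `σ` lies in `A` and misses every vertex of `B`, both the antistar
and the link of `σ` in `A * B` are the joins with `B` of those in `A`; the cone part commutes with
joining by `B` because `(v * ∂σ * M) * B = v * ∂σ * (M * B)`; and joining with `B` distributes
over unions.
-/

open scoped SetFamily

theorem disjoint_of_mem_faces {α : Type*} {A B : SC α} (hdisj : Disjoint A.V B.V)
    {S T : Finset α} (hS : S ∈ A.faces) (hT : T ∈ B.faces) : Disjoint S T :=
  hdisj.mono (A.subset_V S hS) (B.subset_V T hT)

theorem not_subset_of_mem_faces {α : Type*} {A B : SC α} (hdisj : Disjoint A.V B.V)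
    {F T : Finset α} (hF : F ∈ A.faces) (hT : T ∈ B.faces) : ¬ F ⊆ T := fun h => by
  obtain ⟨x, hx⟩ := A.nonempty_mem F hF
  exact Finset.disjoint_left.mp (disjoint_of_mem_faces hdisj hF hT) hx (h hx)

section

variable {α : Type*} [DecidableEq α]

def antistarS (K : Set (Finset α)) (F : Finset α) : Set (Finset α) :=
  {T ∈ K | ¬ F ⊆ T}

/-- The join `v * ∂F * M`; in `stellarS`, `M` is the link of `F`. -/
def stellarCone (M : Set (Finset α)) (F : Finset α) (v : α) : Set (Finset α) :=
  {U | ∃ S T : Finset α, S ⊂ F ∧ (T ∈ M ∨ T = ∅) ∧ U = insert v (S ∪ T)}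

theorem stellarS_eq_antistarS_union (K : Set (Finset α)) (F : Finset α) (v : α) :
    stellarS K F v = antistarS K F ∪ stellarCone (lkS K F) F v :=
  rfl

theorem joinFaces_eq_union_sups (K L : Set (Finset α)) :
    joinFaces K L = K ∪ L ∪ K ⊻ L := by
  ext U
  simp only [joinFaces, Set.mem_union, Set.mem_sups, Set.mem_ofPred_eq, Finset.sup_eq_union,
    eq_comm]

theorem stellarCone_joinFaces (M L : Set (Finset α)) (F : Finset α) (v : α) :
    stellarCone (joinFaces M L) F v = stellarCone M F v ∪ stellarCone M F v ⊻ L := by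
  ext U
  simp only [stellarCone, joinFaces, Set.mem_union, Set.mem_sups, Set.mem_ofPred_eq,
    Finset.sup_eq_union]
  constructor
  · rintro ⟨S, T, hS, (((hT | hT) | ⟨T₁, hT₁, T₂, hT₂, rfl⟩) | rfl), rfl⟩
    · exact .inl ⟨S, T, hS, .inl hT, rfl⟩
    · exact .inr ⟨_, ⟨S, ∅, hS, .inr rfl, rfl⟩, T, hT, by simp⟩
    · exact .inr ⟨_, ⟨S, T₁, hS, .inl hT₁, rfl⟩, T₂, hT₂, by simp [Finset.union_assoc]⟩
    · exact .inl ⟨S, ∅, hS, .inr rfl, rfl⟩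
  · rintro (⟨S, T, hS, hT, rfl⟩ | ⟨_, ⟨S, T, hS, hT | rfl, rfl⟩, T', hT', rfl⟩)
    · exact ⟨S, T, hS, hT.imp_left (.inl ∘ .inl), rfl⟩
    · exact ⟨S, T ∪ T', hS, .inl (.inr ⟨T, hT, T', hT', rfl⟩), by simp [Finset.union_assoc]⟩
    · exact ⟨S, T', hS, .inl (.inl (.inr hT')), by simp⟩

theorem antistarS_joinFaces {A B : SC α} (hdisj : Disjoint A.V B.V) {F : Finset α}
    (hF : F ∈ A.faces) :
    antistarS (joinFaces A.faces B.faces) F = joinFaces (antistarS A.faces F) B.faces := by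
  ext U
  simp only [antistarS, joinFaces, Set.mem_union, Set.mem_ofPred_eq]
  constructor
  · rintro ⟨(hU | hU) | ⟨S, hS, T, hT, rfl⟩, hFU⟩
    · exact .inl (.inl ⟨hU, hFU⟩)
    · exact .inl (.inr hU)
    · exact .inr ⟨S, ⟨hS, fun h => hFU (h.trans Finset.subset_union_left)⟩, T, hT, rfl⟩
  · rintro ((⟨hU, hFU⟩ | hU) | ⟨S, ⟨hS, hFS⟩, T, hT, rfl⟩)
    · exact ⟨.inl (.inl hU), hFU⟩
    · exact ⟨.inl (.inr hU), not_subset_of_mem_faces hdisj hF hU⟩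
    · exact ⟨.inr ⟨S, hS, T, hT, rfl⟩,
        fun h => hFS ((disjoint_of_mem_faces hdisj hF hT).left_le_of_le_sup_right h)⟩

theorem mem_joinFaces_lkS_of_union_eq {A B : SC α} (hdisj : Disjoint A.V B.V)
    {F S T T' : Finset α} (hF : F ∈ A.faces) (hS : S ∈ A.faces) (hT' : T' ∈ B.faces)
    (hTF : T ∩ F = ∅) (h : T ∪ F = S ∪ T') :
    T ∈ joinFaces (lkS A.faces F) B.faces := by
  have hFT' := disjoint_of_mem_faces hdisj hF hT'
  have hST' := disjoint_of_mem_faces hdisj hS hT'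
  have hT'T : T' ⊆ T :=
    hFT'.symm.left_le_of_le_sup_right (h.symm ▸ Finset.subset_union_right :)
  have hS_eq : (T \ T') ∪ F = S := by
    ext x
    have hx := Finset.ext_iff.mp h x
    simp only [Finset.disjoint_left, Finset.ext_iff] at hFT' hST' hTF
    simp only [Finset.mem_union, Finset.mem_sdiff, Finset.mem_inter] at hx hTF ⊢
    grind
  rcases (T \ T').eq_empty_or_nonempty with hT'_eq | hne
  · rw [Finset.sdiff_eq_empty_iff_subset] at hT'_eq
    exact .inl (.inr (hT'_eq.antisymm hT'T ▸ hT'))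
  · refine .inr ⟨T \ T', ⟨hne, ?_, hS_eq ▸ hS⟩, T', hT', (Finset.sdiff_union_of_subset hT'T).symm⟩
    rw [← Finset.disjoint_iff_inter_eq_empty] at hTF ⊢
    exact Finset.disjoint_of_subset_left Finset.sdiff_subset hTF

theorem lkS_joinFaces {A B : SC α} (hdisj : Disjoint A.V B.V) {F : Finset α}
    (hF : F ∈ A.faces) :
    lkS (joinFaces A.faces B.faces) F = joinFaces (lkS A.faces F) B.faces := by
  ext T
  constructor
  · rintro ⟨hT, hTF, (hTFA | hTFB) | ⟨S, hS, T', hT', h⟩⟩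
    · exact .inl (.inl ⟨hT, hTF, hTFA⟩)
    · exact absurd Finset.subset_union_right (not_subset_of_mem_faces hdisj hF hTFB)
    · exact mem_joinFaces_lkS_of_union_eq hdisj hF hS hT' hTF h
  · rintro ((⟨hT, hTF, hTFA⟩ | hTB) | ⟨S, ⟨hS, hSF, hSFA⟩, T', hT', rfl⟩)
    · exact ⟨hT, hTF, .inl (.inl hTFA)⟩
    · refine ⟨B.nonempty_mem T hTB, ?_, .inr ⟨F, hF, T, hTB, Finset.union_comm _ _⟩⟩
      exact Finset.disjoint_iff_inter_eq_empty.mp (disjoint_of_mem_faces hdisj hF hTB).symm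
    · refine ⟨hS.mono Finset.subset_union_left, ?_, .inr ⟨S ∪ F, hSFA, T', hT', ?_⟩⟩
      · rw [Finset.union_inter_distrib_right, hSF, Finset.empty_union,
          ← Finset.disjoint_iff_inter_eq_empty]
        exact (disjoint_of_mem_faces hdisj hF hT').symm
      · rw [Finset.union_right_comm]

end

theorem stellar_join_comm_general {α : Type*} [DecidableEq α]
    (A B : SC α) (hdisj : Disjoint A.V B.V)
    (σ : Finset α) (hσ : σ ∈ A.faces)
    (v : α) :
    stellarS (joinFaces A.faces B.faces) σ v = joinFaces (stellarS A.faces σ v) B.faces := by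
  rw [stellarS_eq_antistarS_union, stellarS_eq_antistarS_union, antistarS_joinFaces hdisj hσ,
    lkS_joinFaces hdisj hσ, stellarCone_joinFaces, joinFaces_eq_union_sups,
    joinFaces_eq_union_sups, Set.sups_union_left]
  ext U
  simp only [Set.mem_union]
  tauto

/-- Stellar subdivision and join commute: for complexes `A`, `B` on
disjoint vertex sets, a face `σ ∈ A` with `|σ| ≥ 2`, and a new vertex `v`,
`stellar_{A*B}(σ) = stellar_A(σ) * B`. -/
theorem stellar_join_comm {α : Type*} [DecidableEq α]
    (A B : SC α) (hdisj : Disjoint A.V B.V)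
    (σ : Finset α) (hσ : σ ∈ A.faces) (hcard : 2 ≤ σ.card)
    (v : α) (hvA : v ∉ A.V) (hvB : v ∉ B.V) :
    stellarS (joinFaces A.faces B.faces) σ v = joinFaces (stellarS A.faces σ v) B.faces :=
  stellar_join_comm_general A B hdisj σ hσ v
end

section
/- Let K be a finite simplicial complex on vertex set V, F ∈ K a face with |F| ≥ 2, v ∉ V a new vertex, Γ = stellar_K(F) the stellar subdivision of K at F with new vertex v, and W ⊆ V. If F ⊄ W, then the induced subcomplex Γ[W] equals K[W]. If F ⊆ W, then the induced subcomplex Γ[W ∪ {v}] equals the stellar subdivision of K[W] at F with new vertex v. -/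
/-- The induced subcomplex of a collection of faces `K` on a vertex set `W`. -/
def restrS {α : Type*} (K : Set (Finset α)) (W : Finset α) : Set (Finset α) :=
  {T ∈ K | T ⊆ W}

/-! Every face of the stellar subdivision is either a face of `K` not containing `F` or
contains the new vertex `v`. Away from `v` only the former survive, and when `F ⊄ W` every
face of `K[W]` is of that kind. When `F ⊆ W`, restricting to `W ∪ {v}` keeps all faces
through `v` whose link part lies in `W`, which is exactly the link of `F` in `K[W]`. -/

section StellarRestriction

variable {α : Type*} [DecidableEq α] {K : Set (Finset α)} {F W : Finset α} {v : α}

theorem restrS_stellarS_of_not_subset (hvW : v ∉ W) (hFW : ¬ F ⊆ W) :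
    restrS (stellarS K F v) W = restrS K W := by
  ext U
  simp only [restrS, stellarS, Set.mem_ofPred_eq, Set.mem_union]
  constructor
  · rintro ⟨⟨hUK, -⟩ | ⟨S, T, -, -, rfl⟩, hUW⟩
    · exact ⟨hUK, hUW⟩
    · exact absurd (hUW (Finset.mem_insert_self v _)) hvW
  · rintro ⟨hUK, hUW⟩
    exact ⟨Or.inl ⟨hUK, fun hFU => hFW (hFU.trans hUW)⟩, hUW⟩

theorem lkS_restrS_of_subset (hFW : F ⊆ W) : lkS (restrS K W) F = {T ∈ lkS K F | T ⊆ W} := by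
  ext T
  simp only [lkS, restrS, Set.mem_ofPred_eq, Finset.union_subset_iff, hFW, and_true, and_assoc]

theorem restrS_insert_stellarS (hK : ∀ T ∈ K, v ∉ T) (hFW : F ⊆ W) :
    restrS (stellarS K F v) (insert v W) = stellarS (restrS K W) F v := by
  have hlk : ∀ T ∈ lkS K F, v ∉ T := fun T hT hvT => hK _ hT.2.2 (Finset.mem_union_left F hvT)
  ext U
  simp only [stellarS, lkS_restrS_of_subset hFW]
  simp only [restrS, Set.mem_ofPred_eq, Set.mem_union]
  constructor
  · rintro ⟨⟨hUK, hFU⟩ | ⟨S, T, hS, hT, rfl⟩, hUW⟩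
    · exact Or.inl ⟨⟨hUK, (Finset.subset_insert_iff_of_notMem (hK U hUK)).1 hUW⟩, hFU⟩
    · refine Or.inr ⟨S, T, hS, ?_, rfl⟩
      rcases hT with hT | rfl
      · have hTU : T ⊆ insert v (S ∪ T) :=
          Finset.subset_union_right.trans (Finset.subset_insert v _)
        exact Or.inl ⟨hT, (Finset.subset_insert_iff_of_notMem (hlk T hT)).1 (hTU.trans hUW)⟩
      · exact Or.inr rfl
  · rintro (⟨⟨hUK, hUW⟩, hFU⟩ | ⟨S, T, hS, hT, rfl⟩)
    · exact ⟨Or.inl ⟨hUK, hFU⟩, hUW.trans (Finset.subset_insert v W)⟩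
    · have hTW : T ⊆ W := by
        rcases hT with ⟨-, hTW⟩ | rfl
        exacts [hTW, Finset.empty_subset W]
      exact ⟨Or.inr ⟨S, T, hS, hT.imp_left And.left, rfl⟩,
        Finset.insert_subset_insert v (Finset.union_subset (hS.subset.trans hFW) hTW)⟩

end StellarRestriction

/-- Effect of a stellar subdivision on induced subcomplexes: restricting
to `W` does nothing if `F ⊄ W`, and restricting to `W ∪ {v}` gives the stellar
subdivision of the restriction if `F ⊆ W`. -/
theorem stellar_restriction {α : Type*} [DecidableEq α]
    (K Γ : SC α) (F : Finset α) (v : α) (h : IsStellar K Γ F v)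
    (W : Finset α) (hW : W ⊆ K.V) :
    (¬ F ⊆ W → restrS Γ.faces W = restrS K.faces W) ∧
    (F ⊆ W → restrS Γ.faces (insert v W) = stellarS (restrS K.faces W) F v) := by
  obtain ⟨-, -, hv, -, hfaces⟩ := h
  rw [hfaces]
  exact ⟨restrS_stellarS_of_not_subset fun hvW => hv (hW hvW),
    restrS_insert_stellarS fun T hT hvT => hv (K.subset_V T hT hvT)⟩
end

section
/- Let Δ be a finite simplicial complex and let e_1 and e_2 be distinct edges of Δ such that no face of Δ contains e_1 ∪ e_2 (i.e., e_1 and e_2 are contained in no common 2-face of Δ). Let u_1, u_2 be two distinct new vertices. Then e_2 is an edge of stellar_Δ(e_1), e_1 is an edge of stellar_Δ(e_2), and subdividing Δ first at e_1 (with new vertex u_1) and then at e_2 (with new vertex u_2) yields the same simplicial complex as subdividing first at e_2 (with u_2) and then at e_1 (with u_1). -/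
/-!
A face of the stellar subdivision at `e₁` that contains `e₂` cannot be one of the new cone faces
`u₁ ∪ S ∪ T` (with `S ⊂ e₁` and `T` in the link of `e₁`): otherwise `e₁ ∪ e₂ ⊆ e₁ ∪ T`, a face of `Δ`.
Hence subdividing at `e₁` changes neither the faces containing `e₂` nor the link of `e₂`, and
both iterated subdivisions consist of the old faces containing neither edge together with the
new faces of the two single subdivisions.
-/

section Stellar

variable {α : Type*} [DecidableEq α]

def stellarNewFaces (K : Set (Finset α)) (F : Finset α) (v : α) : Set (Finset α) :=
  {U | ∃ S T : Finset α, S ⊂ F ∧ (T ∈ lkS K F ∨ T = ∅) ∧ U = insert v (S ∪ T)}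

lemma stellarS_eq_union (K : Set (Finset α)) (F : Finset α) (v : α) :
    stellarS K F v = {T ∈ K | ¬ F ⊆ T} ∪ stellarNewFaces K F v := rfl

variable {K : Set (Finset α)} {e₁ e₂ : Finset α} {u₁ u₂ : α}

lemma not_subset_of_mem_stellarNewFaces (he₁ : e₁ ∈ K) (hcommon : ∀ T ∈ K, ¬ e₁ ∪ e₂ ⊆ T)
    (hu₁ : u₁ ∉ e₂) {U : Finset α} (hU : U ∈ stellarNewFaces K e₁ u₁) : ¬ e₂ ⊆ U := by
  obtain ⟨S, T, hS, hT, rfl⟩ := hU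
  intro hsub
  have hST : e₂ ⊆ S ∪ T := (Finset.subset_insert_iff_of_notMem hu₁).1 hsub
  have hK : T ∪ e₁ ∈ K := by
    rcases hT with hT | rfl
    · exact hT.2.2
    · simpa using he₁
  refine hcommon _ hK (Finset.union_subset Finset.subset_union_right ?_)
  exact hST.trans (Finset.union_subset (hS.subset.trans Finset.subset_union_right)
    Finset.subset_union_left)

lemma lkS_stellarS_of_no_common_face (he₁ : e₁ ∈ K) (hcommon : ∀ T ∈ K, ¬ e₁ ∪ e₂ ⊆ T)
    (hu₁ : u₁ ∉ e₂) : lkS (stellarS K e₁ u₁) e₂ = lkS K e₂ := by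
  ext T
  constructor
  · rintro ⟨hne, hdisj, ⟨hK, -⟩ | hnew⟩
    · exact ⟨hne, hdisj, hK⟩
    · exact absurd Finset.subset_union_right
        (not_subset_of_mem_stellarNewFaces he₁ hcommon hu₁ hnew)
  · rintro ⟨hne, hdisj, hK⟩
    exact ⟨hne, hdisj, Or.inl ⟨hK, fun h ↦
      hcommon _ hK (Finset.union_subset h Finset.subset_union_right)⟩⟩

lemma stellarS_stellarS_of_no_common_face (he₁ : e₁ ∈ K) (hcommon : ∀ T ∈ K, ¬ e₁ ∪ e₂ ⊆ T)
    (hu₁ : u₁ ∉ e₂) :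
    stellarS (stellarS K e₁ u₁) e₂ u₂ =
      {T ∈ K | ¬ e₁ ⊆ T ∧ ¬ e₂ ⊆ T} ∪ (stellarNewFaces K e₁ u₁ ∪ stellarNewFaces K e₂ u₂) := by
  have hnew : stellarNewFaces (stellarS K e₁ u₁) e₂ u₂ = stellarNewFaces K e₂ u₂ := by
    rw [stellarNewFaces, lkS_stellarS_of_no_common_face he₁ hcommon hu₁, stellarNewFaces]
  rw [stellarS_eq_union, hnew, ← Set.union_assoc]
  congr 1
  ext T
  constructor
  · rintro ⟨⟨hK, h₁⟩ | hT, h₂⟩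
    · exact Or.inl ⟨hK, h₁, h₂⟩
    · exact Or.inr hT
  · rintro (⟨hK, h₁, h₂⟩ | hT)
    · exact ⟨Or.inl ⟨hK, h₁⟩, h₂⟩
    · exact ⟨Or.inr hT, not_subset_of_mem_stellarNewFaces he₁ hcommon hu₁ hT⟩

end Stellar

theorem edge_subdivisions_commute_general {α : Type*} [DecidableEq α]
    (Δ : SC α) (e₁ e₂ : Finset α)
    (he₁ : e₁ ∈ Δ.faces) (he₂ : e₂ ∈ Δ.faces)
    (hcommon : ∀ T ∈ Δ.faces, ¬ e₁ ∪ e₂ ⊆ T)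
    (u₁ u₂ : α) (hu₁ : u₁ ∉ Δ.V) (hu₂ : u₂ ∉ Δ.V) :
    e₂ ∈ stellarS Δ.faces e₁ u₁ ∧
    e₁ ∈ stellarS Δ.faces e₂ u₂ ∧
    stellarS (stellarS Δ.faces e₁ u₁) e₂ u₂ = stellarS (stellarS Δ.faces e₂ u₂) e₁ u₁ := by
  have hcommon' : ∀ T ∈ Δ.faces, ¬ e₂ ∪ e₁ ⊆ T := by
    simpa only [Finset.union_comm e₂ e₁] using hcommon
  have h₁₂ : ¬ e₁ ⊆ e₂ := fun h ↦ hcommon e₂ he₂ (Finset.union_subset h subset_rfl)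
  have h₂₁ : ¬ e₂ ⊆ e₁ := fun h ↦ hcommon e₁ he₁ (Finset.union_subset subset_rfl h)
  have hu₁e₂ : u₁ ∉ e₂ := fun h ↦ hu₁ (Δ.subset_V e₂ he₂ h)
  have hu₂e₁ : u₂ ∉ e₁ := fun h ↦ hu₂ (Δ.subset_V e₁ he₁ h)
  refine ⟨Or.inl ⟨he₂, h₁₂⟩, Or.inl ⟨he₁, h₂₁⟩, ?_⟩
  rw [stellarS_stellarS_of_no_common_face he₁ hcommon hu₁e₂,
    stellarS_stellarS_of_no_common_face he₂ hcommon' hu₂e₁, Set.union_comm (stellarNewFaces _ e₂ _)]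
  simp only [and_comm]

/-- If two distinct edges `e₁`, `e₂` of `Δ` lie in no common 2-face
(no face contains `e₁ ∪ e₂`), then each remains an edge after subdividing the other,
and the two edge subdivisions commute. -/
theorem edge_subdivisions_commute {α : Type*} [DecidableEq α]
    (Δ : SC α) (e₁ e₂ : Finset α)
    (he₁ : e₁ ∈ Δ.faces) (he₂ : e₂ ∈ Δ.faces)
    (hc₁ : e₁.card = 2) (hc₂ : e₂.card = 2) (hne : e₁ ≠ e₂)
    (hcommon : ∀ T ∈ Δ.faces, ¬ e₁ ∪ e₂ ⊆ T)
    (u₁ u₂ : α) (hu₁ : u₁ ∉ Δ.V) (hu₂ : u₂ ∉ Δ.V) (huu : u₁ ≠ u₂) :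
    e₂ ∈ stellarS Δ.faces e₁ u₁ ∧
    e₁ ∈ stellarS Δ.faces e₂ u₂ ∧
    stellarS (stellarS Δ.faces e₁ u₁) e₂ u₂ = stellarS (stellarS Δ.faces e₂ u₂) e₁ u₁ :=
  edge_subdivisions_commute_general Δ e₁ e₂ he₁ he₂ hcommon u₁ u₂ hu₁ hu₂
end

section
/- Let Δ be a finite flag simplicial complex and {a,b} an edge of Δ that is contained in no induced 4-cycle of the 1-skeleton of Δ. Then the contraction Δ/{a,b} is a flag simplicial complex. -/
/-- The faces of the contraction of the edge `{a,b}` to a new vertex `v`. -/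
def contrS {α : Type*} [DecidableEq α] (K : Set (Finset α)) (a b v : α) :
    Set (Finset α) :=
  {T ∈ K | a ∉ T ∧ b ∉ T} ∪
  {U | ∃ T : Finset α, a ∉ T ∧ b ∉ T ∧ (insert a T ∈ K ∨ insert b T ∈ K) ∧
    U = insert v T}

/-- The edge `{a,b}` is contained in an induced 4-cycle of the 1-skeleton: there are
vertices `y, z` so that `a, b, y, z` are four distinct vertices with edges `{a,b}`,
`{b,y}`, `{y,z}`, `{z,a}` and non-edges `{a,y}`, `{b,z}`. -/
def EdgeInInduced4 {α : Type*} [DecidableEq α] (K : Set (Finset α)) (a b : α) : Prop :=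
  ∃ y z : α, y ≠ a ∧ y ≠ b ∧ z ≠ a ∧ z ≠ b ∧ y ≠ z ∧
    ({b, y} : Finset α) ∈ K ∧ ({y, z} : Finset α) ∈ K ∧ ({z, a} : Finset α) ∈ K ∧
    ({a, y} : Finset α) ∉ K ∧ ({b, z} : Finset α) ∉ K

/-!
A set of vertices of a flag complex is a face as soon as it is a clique of the 1-skeleton.
Let `M` be a clique of `Δ/{a,b}` containing the new vertex `v`, and `S = M \ {v}`. Then `S`
is a clique of `Δ` avoiding `a` and `b`, each of whose vertices is adjacent to `a` or to `b`.
If `S ∪ {a}` and `S ∪ {b}` were both non-faces, hence non-cliques, some `y ∈ S` would miss `a`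
(so see `b`) and some `z ∈ S` would miss `b` (so see `a`), and `a, b, y, z` would be an induced
4-cycle through `{a,b}`. Hence `M` is a face of the contraction, which is therefore flag.
-/

namespace SC

open Finset

variable {α : Type*} [DecidableEq α]

theorem insert_mem_of_subset (Δ : SC α) {c : α} {S T : Finset α}
    (hT : insert c T ∈ Δ.faces) (hST : S ⊆ T) : insert c S ∈ Δ.faces :=
  Δ.down_closed _ hT _ (insert_subset_insert c hST) (insert_nonempty c S)

theorem isFlag_iff (Δ : SC α) :
    IsFlag Δ ↔ ∀ F ⊆ Δ.V, F.Nonempty →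
      (F : Set α).Pairwise (fun x y => ({x, y} : Finset α) ∈ Δ.faces) → F ∈ Δ.faces := by
  constructor
  · intro hΔ F
    induction F using Finset.strongInduction with
    | H F ih =>
      intro hFV hF hpair
      by_contra hFK
      obtain ⟨x, rfl⟩ | hnt := hF.exists_eq_singleton_or_nontrivial
      · exact hFK (Δ.singleton_mem x (hFV (mem_singleton_self x)))
      have hmiss : Missing Δ.faces F :=
        ⟨one_lt_card_iff_nontrivial.2 hnt, hFK, fun T hT hTne =>
          ih T hT (hT.subset.trans hFV) hTne (hpair.mono (coe_subset.2 hT.subset))⟩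
      obtain ⟨x, y, hxy, rfl⟩ := card_eq_two.1 (hΔ F hmiss)
      exact hFK (hpair (by simp) (by simp) hxy)
  · rintro h M ⟨hM2, hMK, hsub⟩
    by_contra hne
    have hsmall : ∀ T ⊆ M, T.card ≤ 2 → T.Nonempty → T ∈ Δ.faces := by
      intro T hTM hT hTne
      exact hsub T (Finset.ssubset_iff_subset_ne.2 ⟨hTM, by rintro rfl; omega⟩) hTne
    refine hMK (h M (fun x hx => ?_) (card_pos.1 (by omega)) fun x hx y hy hxy => ?_)
    · exact Δ.subset_V _ (hsmall {x} (by simpa) (by simp) (by simp)) (mem_singleton_self x)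
    · exact hsmall {x, y} (insert_subset_iff.2 ⟨hx, singleton_subset_iff.2 hy⟩) card_le_two
        (insert_nonempty x {y})

theorem mem_contrS_of_notMem {K : Set (Finset α)} {a b v : α} {U : Finset α} (hvU : v ∉ U) :
    U ∈ contrS K a b v ↔ U ∈ K ∧ a ∉ U ∧ b ∉ U := by
  refine ⟨?_, Or.inl⟩
  rintro (h | ⟨T, -, -, -, rfl⟩)
  · exact h
  · exact absurd (mem_insert_self v T) hvU

theorem insert_mem_contrS_iff (Δ : SC α) {a b v : α} {U : Finset α} (hv : v ∉ Δ.V)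
    (hvU : v ∉ U) :
    insert v U ∈ contrS Δ.faces a b v ↔
      a ∉ U ∧ b ∉ U ∧ (insert a U ∈ Δ.faces ∨ insert b U ∈ Δ.faces) := by
  refine ⟨?_, fun ⟨haU, hbU, hU⟩ => Or.inr ⟨U, haU, hbU, hU, rfl⟩⟩
  rintro (⟨h, -⟩ | ⟨T, haT, hbT, hT, hUT⟩)
  · exact absurd (Δ.subset_V _ h (mem_insert_self v U)) hv
  · have hvT : v ∉ T := fun h => hv <| by
      rcases hT with hT | hT <;> exact Δ.subset_V _ hT (mem_insert_of_mem h)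
    obtain rfl : U = T := by
      simpa only [erase_insert hvU, erase_insert hvT] using congrArg (·.erase v) hUT
    exact ⟨haT, hbT, hT⟩

/-- The contraction `Δ/{a,b}`; `a ∈ Δ.V` makes `{v}` a face. -/
def contract (Δ : SC α) (a b v : α) (ha : a ∈ Δ.V) : SC α where
  V := insert v (Δ.V \ {a, b})
  faces := contrS Δ.faces a b v
  nonempty_mem := by
    rintro F (⟨hF, -⟩ | ⟨T, -, -, -, rfl⟩)
    exacts [Δ.nonempty_mem F hF, insert_nonempty v T]
  subset_V := by
    rintro F (⟨hF, haF, hbF⟩ | ⟨T, haT, hbT, hT, rfl⟩)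
    · exact (subset_sdiff.2 ⟨Δ.subset_V F hF, by simp [haF, hbF]⟩).trans (subset_insert _ _)
    · refine insert_subset_insert v (subset_sdiff.2 ⟨?_, by simp [haT, hbT]⟩)
      rcases hT with hT | hT <;> exact (subset_insert _ T).trans (Δ.subset_V _ hT)
  down_closed := by
    rintro F (⟨hF, haF, hbF⟩ | ⟨T, haT, hbT, hT, rfl⟩) W hWF hW
    · exact Or.inl ⟨Δ.down_closed F hF W hWF hW, fun h => haF (hWF h), fun h => hbF (hWF h)⟩
    have hWT : W.erase v ⊆ T := subset_insert_iff.1 hWF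
    have hW' : insert a (W.erase v) ∈ Δ.faces ∨ insert b (W.erase v) ∈ Δ.faces :=
      hT.imp (Δ.insert_mem_of_subset · hWT) (Δ.insert_mem_of_subset · hWT)
    by_cases hvW : v ∈ W
    · exact Or.inr ⟨W.erase v, fun h => haT (hWT h), fun h => hbT (hWT h), hW',
        (insert_erase hvW).symm⟩
    rw [erase_eq_of_notMem hvW] at hWT hW'
    refine Or.inl ⟨?_, fun h => haT (hWT h), fun h => hbT (hWT h)⟩
    rcases hW' with h | h <;> exact Δ.down_closed _ h W (subset_insert _ W) hW
  singleton_mem := by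
    intro x hx
    rcases mem_insert.1 hx with rfl | hx
    · exact Or.inr ⟨∅, notMem_empty a, notMem_empty b,
        Or.inl (by simpa using Δ.singleton_mem a ha), by simp⟩
    · simp only [mem_sdiff, mem_insert, mem_singleton, not_or] at hx
      exact Or.inl ⟨Δ.singleton_mem x hx.1, by simp [Ne.symm hx.2.1], by simp [Ne.symm hx.2.2]⟩

theorem insert_mem_or_insert_mem_of_not_edgeInInduced4 {Δ : SC α} (hΔ : IsFlag Δ) {a b : α}
    (hno4 : ¬ EdgeInInduced4 Δ.faces a b) (ha : a ∈ Δ.V) (hb : b ∈ Δ.V) {S : Finset α}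
    (hSV : S ⊆ Δ.V) (haS : a ∉ S) (hbS : b ∉ S)
    (hS : (S : Set α).Pairwise (fun x y => ({x, y} : Finset α) ∈ Δ.faces))
    (hadj : ∀ x ∈ S, ({a, x} : Finset α) ∈ Δ.faces ∨ ({b, x} : Finset α) ∈ Δ.faces) :
    insert a S ∈ Δ.faces ∨ insert b S ∈ Δ.faces := by
  have : Std.Symm fun x y : α => ({x, y} : Finset α) ∈ Δ.faces :=
    ⟨fun x y h => pair_comm x y ▸ h⟩
  have hnonadj : ∀ c ∈ Δ.V, insert c S ∉ Δ.faces →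
      ∃ x ∈ S, ({c, x} : Finset α) ∉ Δ.faces := by
    intro c hc hcS
    by_contra! hcx
    refine hcS (Δ.isFlag_iff.1 hΔ _ (insert_subset hc hSV) (insert_nonempty c S) ?_)
    rw [coe_insert, Set.pairwise_insert_of_symm]
    exact ⟨hS, fun x hx _ => hcx x hx⟩
  by_contra! h
  obtain ⟨y, hyS, hay⟩ := hnonadj a ha h.1
  obtain ⟨z, hzS, hbz⟩ := hnonadj b hb h.2
  have hby := (hadj y hyS).resolve_left hay
  have hyz : y ≠ z := by rintro rfl; exact hbz hby
  exact hno4 ⟨y, z, ne_of_mem_of_not_mem hyS haS, ne_of_mem_of_not_mem hyS hbS,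
    ne_of_mem_of_not_mem hzS haS, ne_of_mem_of_not_mem hzS hbS, hyz, hby, hS hyS hzS hyz,
    pair_comm a z ▸ (hadj z hzS).resolve_right hbz, hay, hbz⟩

theorem isFlag_contract {Δ : SC α} (hΔ : IsFlag Δ) {a b v : α}
    (hno4 : ¬ EdgeInInduced4 Δ.faces a b) (hv : v ∉ Δ.V) (ha : a ∈ Δ.V) (hb : b ∈ Δ.V) :
    IsFlag (Δ.contract a b v ha) := by
  rw [isFlag_iff]
  intro M hMV hMne hM
  change M ⊆ insert v (Δ.V \ {a, b}) at hMV
  change (M : Set α).Pairwise fun x y => ({x, y} : Finset α) ∈ contrS Δ.faces a b v at hM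
  change M ∈ contrS Δ.faces a b v
  set S := M.erase v
  have hvS : v ∉ S := notMem_erase v M
  obtain ⟨hSV, hSab⟩ := subset_sdiff.1 (subset_insert_iff.1 hMV)
  have haS : a ∉ S := fun h => disjoint_left.1 hSab h (by simp)
  have hbS : b ∉ S := fun h => disjoint_left.1 hSab h (by simp)
  have hS : (S : Set α).Pairwise fun x y => ({x, y} : Finset α) ∈ Δ.faces :=
    fun x hx y hy hxy => by
      have hvxy : v ∉ ({x, y} : Finset α) := by
        simp [(ne_of_mem_erase hx).symm, (ne_of_mem_erase hy).symm]
      exact ((mem_contrS_of_notMem hvxy).1 (hM (mem_of_mem_erase hx) (mem_of_mem_erase hy) hxy)).1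
  by_cases hvM : v ∈ M
  · rw [← insert_erase hvM]
    refine (Δ.insert_mem_contrS_iff hv hvS).2 ⟨haS, hbS, ?_⟩
    refine insert_mem_or_insert_mem_of_not_edgeInInduced4 hΔ hno4 ha hb hSV haS hbS hS
      fun x hx => ?_
    have hvx : v ≠ x := (ne_of_mem_erase hx).symm
    exact ((Δ.insert_mem_contrS_iff hv (notMem_singleton.2 hvx)).1
      (hM hvM (mem_of_mem_erase hx) hvx)).2.2
  · have hMS : M = S := (erase_eq_of_notMem hvM).symm
    rw [hMS] at hMne ⊢
    exact (mem_contrS_of_notMem hvS).2 ⟨Δ.isFlag_iff.1 hΔ S hSV hMne hS, haS, hbS⟩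

end SC

theorem contraction_of_flag_is_flag_general {α : Type*} [DecidableEq α]
    (Δ : SC α) (hΔ : IsFlag Δ) (a b : α)
    (he : ({a, b} : Finset α) ∈ Δ.faces)
    (hno4 : ¬ EdgeInInduced4 Δ.faces a b)
    (v : α) (hv : v ∉ Δ.V) :
    ∃ Δ' : SC α, Δ'.V = insert v (Δ.V \ {a, b}) ∧
      Δ'.faces = contrS Δ.faces a b v ∧ IsFlag Δ' := by
  have ha : a ∈ Δ.V := Δ.subset_V _ he (by simp)
  have hb : b ∈ Δ.V := Δ.subset_V _ he (by simp)
  exact ⟨Δ.contract a b v ha, rfl, rfl, SC.isFlag_contract hΔ hno4 hv ha hb⟩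

/-- Contracting an edge of a flag complex that lies in no induced 4-cycle
of the 1-skeleton yields a flag simplicial complex. -/
theorem contraction_of_flag_is_flag {α : Type*} [DecidableEq α]
    (Δ : SC α) (hΔ : IsFlag Δ) (a b : α) (hab : a ≠ b)
    (he : ({a, b} : Finset α) ∈ Δ.faces)
    (hno4 : ¬ EdgeInInduced4 Δ.faces a b)
    (v : α) (hv : v ∉ Δ.V) :
    ∃ Δ' : SC α, Δ'.V = insert v (Δ.V \ {a, b}) ∧
      Δ'.faces = contrS Δ.faces a b v ∧ IsFlag Δ' :=
  contraction_of_flag_is_flag_general Δ hΔ a b he hno4 v hv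
end

section
/- Let Δ be a finite flag simplicial complex on vertex set V, e = {a,b} an edge of Δ, v ∉ V a new vertex, and Γ the stellar subdivision of Δ at e with new vertex v. Then the edge {v,a} of Γ is contained in no induced 4-cycle of the 1-skeleton of Γ, and the contraction Γ/{v,a} is isomorphic to Δ. -/
/-!
In the subdivision `Γ`, a face avoiding `v` is a face of `Δ` not containing `{a, b}`, and
`insert v T` is a face iff `T ∪ {a, b} ∈ Δ` and `{a, b} ⊄ T`. If `v, a, y, z` were an induced
4-cycle, `z` would be a neighbour of `v`: for `z = b`, flagness of `Δ` turns the edges `ay`, `yb`,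
`ab` into the face `{y, a, b}`, making `y` adjacent to `v`; otherwise `{z, a, b} ∈ Δ` makes `z`
adjacent to `a`. For the contraction, the transposition of `u` and `a` is an isomorphism:
`insert u T` is a face of `Γ/{v,a}` iff `insert v T` or `insert a T` is a face of `Γ`, and one of
them is a face exactly when `insert a T ∈ Δ`.
-/

section

variable {α : Type*} [DecidableEq α]

theorem IsFlag.mem_faces_of_pairwise {Δ : SC α} (hΔ : IsFlag Δ) (T : Finset α)
    (hcard : 2 ≤ T.card) (hpair : (T : Set α).Pairwise fun x y => {x, y} ∈ Δ.faces) :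
    T ∈ Δ.faces := by
  induction T using Finset.strongInduction with
  | H T ih =>
  by_contra hT
  have hmissing : Missing Δ.faces T := by
    refine ⟨hcard, hT, fun S hS hSne => ?_⟩
    obtain hS2 | hS1 : 2 ≤ S.card ∨ S.card = 1 := by
      have := hSne.card_pos
      omega
    · exact ih S hS hS2 (hpair.mono (Finset.coe_subset.mpr hS.subset))
    · obtain ⟨x, rfl⟩ := Finset.card_eq_one.mp hS1
      have hx : x ∈ T := hS.subset (Finset.mem_singleton_self x)
      obtain ⟨y, hy, hyx⟩ := Finset.exists_mem_ne hcard x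
      exact Δ.down_closed _ (hpair hx hy hyx.symm) {x} (by simp) (by simp)
  obtain ⟨x, y, hxy, rfl⟩ := Finset.card_eq_two.mp (hΔ T hmissing)
  exact hT (hpair (by simp) (by simp) hxy)

theorem mem_contrS_iff_of_notMem {K : Set (Finset α)} {a b u : α} {T : Finset α}
    (huT : u ∉ T) : T ∈ contrS K a b u ↔ T ∈ K ∧ a ∉ T ∧ b ∉ T := by
  simp only [contrS, Set.mem_union, Set.mem_ofPred_eq, or_iff_left_iff_imp]
  rintro ⟨T₀, -, -, -, rfl⟩
  exact absurd (Finset.mem_insert_self u T₀) huT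

theorem insert_mem_contrS_iff {K : Set (Finset α)} {a b u : α} (hu : ∀ S ∈ K, u ∉ S)
    {T : Finset α} (huT : u ∉ T) (haT : a ∉ T) (hbT : b ∉ T) :
    insert u T ∈ contrS K a b u ↔ insert a T ∈ K ∨ insert b T ∈ K := by
  simp only [contrS, Set.mem_union, Set.mem_ofPred_eq]
  constructor
  · rintro (⟨hK, -⟩ | ⟨T₀, -, -, hT₀, hT⟩)
    · exact absurd (Finset.mem_insert_self u T) (hu _ hK)
    · have huT₀ : u ∉ T₀ := by
        rcases hT₀ with hT₀ | hT₀ <;> exact fun h => hu _ hT₀ (Finset.mem_insert_of_mem h)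
      rwa [← Finset.erase_insert huT, hT, Finset.erase_insert huT₀]
  · exact fun hT => Or.inr ⟨T, haT, hbT, hT, rfl⟩

theorem Finset.image_swap_of_notMem {s : Finset α} {a b : α} (ha : a ∉ s) (hb : b ∉ s) :
    s.image (Equiv.swap a b) = s :=
  (Finset.image_congr fun _ hx => Equiv.swap_apply_of_ne_of_ne (ne_of_mem_of_not_mem hx ha)
    (ne_of_mem_of_not_mem hx hb)).trans Finset.image_id'

namespace IsStellar

variable {Δ Γ : SC α} {F : Finset α} {v : α}

theorem notMem_of_mem_faces (h : IsStellar Δ Γ F v) {T : Finset α} (hT : T ∈ Δ.faces) :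
    v ∉ T :=
  fun hv => h.2.2.1 (Δ.subset_V T hT hv)

theorem mem_faces_iff_of_notMem (h : IsStellar Δ Γ F v) {T : Finset α} (hvT : v ∉ T) :
    T ∈ Γ.faces ↔ T ∈ Δ.faces ∧ ¬ F ⊆ T := by
  rw [h.2.2.2.2, stellarS, Set.mem_union, or_iff_left]
  · rfl
  rintro ⟨S, R, -, -, rfl⟩
  exact hvT (Finset.mem_insert_self v _)

theorem insert_mem_faces_iff (h : IsStellar Δ Γ F v) {T : Finset α} (hvT : v ∉ T) :
    insert v T ∈ Γ.faces ↔ T ∪ F ∈ Δ.faces ∧ ¬ F ⊆ T := by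
  have hvF : v ∉ F := h.notMem_of_mem_faces h.1
  rw [h.2.2.2.2, stellarS, Set.mem_union, or_iff_right (fun hK => h.notMem_of_mem_faces hK.1
    (Finset.mem_insert_self v T))]
  constructor
  · rintro ⟨S, R, hS, hR, hT⟩
    obtain ⟨hRF, hRF_disj⟩ : R ∪ F ∈ Δ.faces ∧ R ∩ F = ∅ := by
      rcases hR with ⟨-, hdisj, hface⟩ | rfl
      exacts [⟨hface, hdisj⟩, by simpa using h.1]
    have hvSR : v ∉ S ∪ R := by
      simp only [Finset.mem_union, not_or]
      exact ⟨fun hv => hvF (hS.subset hv), fun hv => h.notMem_of_mem_faces hRF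
        (Finset.mem_union_left F hv)⟩
    obtain rfl : T = S ∪ R := by
      rw [← Finset.erase_insert hvT, hT, Finset.erase_insert hvSR]
    refine ⟨by rwa [Finset.union_comm S R, Finset.union_assoc,
      Finset.union_eq_right.mpr hS.subset], fun hFSR => hS.not_subset fun x hx => ?_⟩
    refine (Finset.mem_union.mp (hFSR hx)).resolve_right fun hxR => ?_
    simpa [hRF_disj] using Finset.mem_inter.mpr ⟨hxR, hx⟩
  · rintro ⟨hTF, hFT⟩
    refine ⟨T ∩ F, T \ F, ?_, ?_, ?_⟩
    · exact Finset.ssubset_iff_subset_ne.mpr ⟨Finset.inter_subset_right,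
        fun hTF => hFT (Finset.inter_eq_right.mp hTF)⟩
    · rcases (T \ F).eq_empty_or_nonempty with hempty | hne
      · exact Or.inr hempty
      · exact Or.inl ⟨hne, Finset.sdiff_inter_self F T, by rwa [Finset.sdiff_union_self_eq_union]⟩
    · rw [Finset.union_comm, Finset.sdiff_union_inter]

theorem not_edgeInInduced4 (hΔ : IsFlag Δ) {a b : α} (h : IsStellar Δ Γ {a, b} v) :
    ¬ EdgeInInduced4 Γ.faces v a := by
  have hab : a ≠ b := by
    rintro rfl
    simpa using h.2.1
  have hva : v ≠ a := fun hva => h.notMem_of_mem_faces h.1 (by simp [hva])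
  have hfaceΔ : ∀ {x y : α}, x ≠ v → y ≠ v → {x, y} ∈ Γ.faces → {x, y} ∈ Δ.faces :=
    fun hx hy hxy => ((h.mem_faces_iff_of_notMem (by simp [hx.symm, hy.symm])).mp hxy).1
  rintro ⟨y, z, hyv, hya, hzv, hza, hyz, hay, hyz', hzv', hvy, haz⟩
  rw [Finset.pair_comm, h.insert_mem_faces_iff (Finset.notMem_singleton.mpr hzv.symm)] at hzv'
  obtain rfl | hzb := eq_or_ne z b
  · apply hvy
    rw [h.insert_mem_faces_iff (Finset.notMem_singleton.mpr hyv.symm)]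
    refine ⟨hΔ.mem_faces_of_pairwise _ ?_ ?_,
      fun hsub => hya.symm (Finset.mem_singleton.mp (hsub (by simp)))⟩
    · rw [Finset.card_union_of_disjoint (by simp [hya, hyz]), Finset.card_pair hab]
      omega
    · have hay := hfaceΔ hva.symm hyv hay
      have hyz := hfaceΔ hyv hzv hyz'
      have haz := h.1
      intro p hp q hq hpq
      simp only [Finset.coe_union, Finset.coe_singleton, Finset.coe_pair, Set.mem_union,
        Set.mem_insert_iff, Set.mem_singleton_iff] at hp hq
      rcases hp with rfl | rfl | rfl <;> rcases hq with rfl | rfl | rfl <;>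
        first | exact absurd rfl hpq | assumption | rwa [Finset.pair_comm]
  · apply haz
    rw [h.mem_faces_iff_of_notMem (by simp [hva, hzv.symm])]
    refine ⟨Δ.down_closed _ hzv'.1 _ (by simp [Finset.insert_subset_iff]) (by simp), ?_⟩
    simp [Finset.insert_subset_iff, hab.symm, hzb.symm]

theorem insert_mem_faces_or_insert_mem_faces_iff (h : IsStellar Δ Γ F v) {a : α} (ha : a ∈ F)
    {T : Finset α} (hvT : v ∉ T) (haT : a ∉ T) :
    insert v T ∈ Γ.faces ∨ insert a T ∈ Γ.faces ↔ insert a T ∈ Δ.faces := by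
  have hva : v ≠ a := fun hva => h.notMem_of_mem_faces h.1 (hva ▸ ha)
  have haT_sub : insert a T ⊆ T ∪ F :=
    Finset.insert_subset (Finset.mem_union_right T ha) Finset.subset_union_left
  rw [h.insert_mem_faces_iff hvT, h.mem_faces_iff_of_notMem (by simp [hva, hvT])]
  constructor
  · rintro (⟨hTF, -⟩ | ⟨haTF, -⟩)
    · exact Δ.down_closed _ hTF _ haT_sub (Finset.insert_nonempty a T)
    · exact haTF
  · intro haTF
    by_cases hF : F ⊆ insert a T
    · have hTF : T ∪ F = insert a T :=
        (Finset.union_subset (Finset.subset_insert a T) hF).antisymm haT_sub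
      exact Or.inl ⟨hTF ▸ haTF, fun hFT => haT (hFT ha)⟩
    · exact Or.inr ⟨haTF, hF⟩

theorem isomS_contrS (h : IsStellar Δ Γ F v) {a u : α} (ha : a ∈ F) (hu : u ∉ Γ.V) :
    IsomS (contrS Γ.faces v a u) (insert u ((↑Γ.V : Set α) \ {v, a})) Δ.faces ↑Δ.V := by
  have haV : a ∈ Δ.V := Δ.subset_V F h.1 ha
  have huΔ : u ∉ Δ.V := fun huΔ => hu (h.2.2.2.1 ▸ Finset.mem_insert_of_mem huΔ)
  have huv : u ≠ v := fun huv => hu (h.2.2.2.1 ▸ huv ▸ Finset.mem_insert_self u Δ.V)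
  have hua : u ≠ a := fun hua => huΔ (hua ▸ haV)
  have hdom : insert u ((↑Γ.V : Set α) \ {v, a}) = Equiv.swap a u '' ↑Δ.V := by
    rw [Equiv.image_swap_of_mem_of_notMem haV huΔ, h.2.2.2.1]
    ext x
    have hvΔ : v ∉ Δ.V := h.2.2.1
    simp only [Set.mem_insert_iff, Set.mem_sdiff, Finset.coe_insert, Finset.mem_coe,
      Set.mem_singleton_iff, not_or]
    grind
  refine ⟨Equiv.swap u a, ?_, fun T hT => ?_⟩
  · rw [hdom, Equiv.swap_comm]
    exact (Equiv.swap a u).bijOn_symm_image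
  have hvT : v ∉ T := fun hv => by simpa [huv.symm] using hT hv
  have haT : a ∉ T := fun ha => by simpa [hua.symm] using hT ha
  by_cases huT : u ∈ T
  · obtain ⟨T, huT', rfl⟩ : ∃ T' : Finset α, u ∉ T' ∧ T = insert u T' :=
      ⟨T.erase u, Finset.notMem_erase u T, (Finset.insert_erase huT).symm⟩
    rw [Finset.mem_insert, not_or] at hvT haT
    rw [Finset.image_insert, Equiv.swap_apply_left, Finset.image_swap_of_notMem huT' haT.2,
      insert_mem_contrS_iff (fun S hS hu' => hu (Γ.subset_V S hS hu')) huT' hvT.2 haT.2]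
    exact h.insert_mem_faces_or_insert_mem_faces_iff ha hvT.2 haT.2
  · rw [Finset.image_swap_of_notMem huT haT, mem_contrS_iff_of_notMem huT,
      h.mem_faces_iff_of_notMem hvT]
    exact ⟨fun hT => hT.1.1, fun hT => ⟨⟨hT, fun hF => haT (hF ha)⟩, hvT, haT⟩⟩

end IsStellar

end

theorem subdivided_edge_contracts_back_general {α : Type*} [DecidableEq α]
    (Δ Γ : SC α) (hΔ : IsFlag Δ) (a b : α) (v : α)
    (h : IsStellar Δ Γ {a, b} v) :
    ¬ EdgeInInduced4 Γ.faces v a ∧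
    ∀ u : α, u ∉ Γ.V →
      IsomS (contrS Γ.faces v a u) (insert u ((↑Γ.V : Set α) \ {v, a}))
        Δ.faces ↑Δ.V :=
  ⟨h.not_edgeInInduced4 hΔ, fun _ hu => h.isomS_contrS (Finset.mem_insert_self a {b}) hu⟩

/-- After subdividing the edge `{a,b}` of a flag complex `Δ` with new
vertex `v`, the edge `{v,a}` of the subdivision `Γ` lies in no induced 4-cycle of the
1-skeleton of `Γ`, and contracting `{v,a}` yields a complex isomorphic to `Δ`. -/
theorem subdivided_edge_contracts_back {α : Type*} [DecidableEq α]
    (Δ Γ : SC α) (hΔ : IsFlag Δ) (a b : α) (hab : a ≠ b) (v : α)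
    (h : IsStellar Δ Γ {a, b} v) :
    ¬ EdgeInInduced4 Γ.faces v a ∧
    ∀ u : α, u ∉ Γ.V →
      IsomS (contrS Γ.faces v a u) (insert u ((↑Γ.V : Set α) \ {v, a}))
        Δ.faces ↑Δ.V :=
  subdivided_edge_contracts_back_general Δ Γ hΔ a b v h
end
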